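/- arXiv:1311.2809 — 5 statements merged into one kernel-verified Lean document; each statement's English description precedes it below -/
import Mathlib

section
/- Let K be an imaginary quadratic field with ring of integers O_K, and let q be a nonzero ideal of O_K. If w lies in the dual of q with respect to the trace pairing (i.e., Tr_{K/Q}(wβ) ∈ ℤ for all β ∈ q), and β ranges over a complete residue system modulo q, then for every ε > 0 the quadratic exponential sum ∑_{β mod q} e^{2πi Tr(wβ²)} is bounded by O_ε(N(wqD_K + q)^{1/2-ε} · N(q)^{1/2+ε}), where D_K is the different of K and N denotes the absolute ideal norm. -/
/-!
Let `ψ(x) = e(Tr x)` and let `𝔡` be the different. Since `w q ⊆ 𝔡⁻¹`, the map `β ↦ ψ(w β)` is a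
character of `𝓞 K ⧸ q`, and the sum is `S = ∑ₓ ψ(w x²)`. Weyl differencing gives
`|S|² = ∑_y ψ(w y²) ∑ₓ ψ(2 w x y)`; the inner sum is `N q` when `y` lies in the image of
`c = {δ : 2 w δ ∈ 𝔡⁻¹}` and vanishes otherwise. As `c · (2) · (w q 𝔡 + q) ⊆ q`, the index
`[c : q]` is at most `N(2) · N(w q 𝔡 + q)`, so `|S|² ≤ N(2) · N(w q 𝔡 + q) · N q`, and the
`ε`-loss comes from `N(w q 𝔡 + q) ≤ N q`.
-/

open NumberField
open scoped nonZeroDivisors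

noncomputable def traceAddChar (A : Type*) [CommRing A] [Algebra ℚ A] : AddChar A ℂ where
  toFun x := Complex.exp (2 * Real.pi * Complex.I * ((Algebra.trace ℚ A x : ℚ) : ℂ))
  map_zero_eq_one' := by simp
  map_add_eq_mul' x y := by rw [map_add, Rat.cast_add, mul_add, Complex.exp_add]

section traceAddChar

variable {A : Type*} [CommRing A] [Algebra ℚ A]

lemma traceAddChar_apply (x : A) :
    traceAddChar A x = Complex.exp (2 * Real.pi * Complex.I * ((Algebra.trace ℚ A x : ℚ) : ℂ)) :=
  rfl

lemma traceAddChar_eq_one_iff {x : A} :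
    traceAddChar A x = 1 ↔ ∃ n : ℤ, Algebra.trace ℚ A x = n := by
  rw [traceAddChar_apply, Complex.exp_eq_one_iff]
  refine exists_congr fun n => ?_
  rw [mul_comm, mul_left_inj' (by simp [Real.pi_ne_zero]), ← Rat.cast_intCast, Rat.cast_inj]

end traceAddChar

namespace AddChar

section liftQuotient

variable {R M : Type*} [CommRing R] [CommMonoid M]

def liftQuotient (I : Ideal R) (ψ : AddChar R M) (hψ : ∀ a ∈ I, ψ a = 1) :
    AddChar (R ⧸ I) M where
  toFun := Quotient.lift ψ fun a b hab => by
    have hab : a - b ∈ I := (Submodule.quotientRel_def I).mp hab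
    rw [← sub_add_cancel a b, map_add_eq_mul, hψ _ hab, one_mul]
  map_zero_eq_one' := ψ.map_zero_eq_one
  map_add_eq_mul' := by
    rintro ⟨a⟩ ⟨b⟩
    exact ψ.map_add_eq_mul a b

@[simp]
lemma liftQuotient_mk (I : Ideal R) (ψ : AddChar R M) (hψ : ∀ a ∈ I, ψ a = 1) (a : R) :
    liftQuotient I ψ hψ (Ideal.Quotient.mk I a) = ψ a :=
  rfl

end liftQuotient

theorem sq_norm_sum_apply_sq_le {R : Type*} [CommRing R] [Fintype R] (ψ : AddChar R ℂ) :
    ‖∑ x, ψ (x ^ 2)‖ ^ 2 ≤ Nat.card R * Nat.card {y : R | ψ.mulShift (2 * y) = 0} := by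
  have hdiff (x y : R) :
      ψ ((x + y) ^ 2) * starRingEnd ℂ (ψ (x ^ 2)) = ψ (y ^ 2) * ψ.mulShift (2 * y) x := by
    rw [← map_neg_eq_conj, ← map_add_eq_mul, mulShift_apply, ← map_add_eq_mul]
    congr 1
    ring
  have hexpand : (∑ x, ψ (x ^ 2)) * starRingEnd ℂ (∑ x, ψ (x ^ 2)) =
      ∑ y, ψ (y ^ 2) * ∑ x, ψ.mulShift (2 * y) x := by
    rw [map_sum, Finset.sum_mul_sum, Finset.sum_comm]
    calc ∑ x, ∑ z, ψ (z ^ 2) * starRingEnd ℂ (ψ (x ^ 2))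
        = ∑ x, ∑ y, ψ ((x + y) ^ 2) * starRingEnd ℂ (ψ (x ^ 2)) :=
          Finset.sum_congr rfl fun x _ => (Equiv.sum_comp (Equiv.addLeft x) _).symm
      _ = ∑ y, ψ (y ^ 2) * ∑ x, ψ.mulShift (2 * y) x := by
          simp_rw [hdiff, Finset.mul_sum]
          exact Finset.sum_comm
  calc ‖∑ x, ψ (x ^ 2)‖ ^ 2 = ‖∑ y, ψ (y ^ 2) * ∑ x, ψ.mulShift (2 * y) x‖ := by
        rw [← hexpand, norm_mul, Complex.norm_conj, sq]
    _ ≤ ∑ y, ‖∑ x, ψ.mulShift (2 * y) x‖ := by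
        refine (norm_sum_le _ _).trans (Finset.sum_le_sum fun y _ => ?_)
        rw [norm_mul, norm_apply, one_mul]
    _ = Nat.card R * Nat.card {y : R | ψ.mulShift (2 * y) = 0} := by
        simp_rw [sum_eq_ite, apply_ite, norm_natCast, norm_zero]
        rw [Finset.sum_ite, Finset.sum_const_zero, add_zero, Finset.sum_const, nsmul_eq_mul,
          mul_comm]
        simp [Nat.card_eq_fintype_card, Fintype.card_subtype]

end AddChar

theorem Ideal.natCard_map_mkQ_le_absNorm {S : Type*} [CommRing S] [IsDedekindDomain S]
    [Module.Free ℤ S] [Module.Finite ℤ S] {q c J : Ideal S}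
    (hq : q ≠ ⊥) (hqc : q ≤ c) (hcJ : c * J ≤ q) (hJ : J ≠ ⊥) :
    Nat.card (Submodule.map q.mkQ c) ≤ absNorm J := by
  have hcard : Nat.card (Submodule.map q.mkQ c) * absNorm c = absNorm q := by
    simpa only [absNorm_apply, Submodule.cardQuot_apply] using
      Submodule.card_quotient_mul_card_quotient c q hqc
  have hc : absNorm c ≠ 0 := absNorm_eq_zero_iff.not.2 (ne_bot_of_le_ne_bot hq hqc)
  have hdvd : Nat.card (Submodule.map q.mkQ c) * absNorm c ∣ absNorm J * absNorm c := by
    rw [hcard, mul_comm, ← _root_.map_mul]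
    exact absNorm_dvd_absNorm_of_le hcJ
  exact Nat.le_of_dvd (Nat.pos_of_ne_zero (absNorm_eq_zero_iff.not.2 hJ))
    (Nat.dvd_of_mul_dvd_mul_right (Nat.pos_of_ne_zero hc) hdvd)

lemma Real.le_sqrt_mul_rpow_mul_rpow {s B a n ε : ℝ} (hB : 0 ≤ B) (ha : 0 < a) (han : a ≤ n)
    (hε : 0 ≤ ε) (h : s ^ 2 ≤ B * a * n) :
    s ≤ √B * a ^ ((1 : ℝ) / 2 - ε) * n ^ ((1 : ℝ) / 2 + ε) := by
  have hn : 0 < n := ha.trans_le han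
  calc s ≤ √(B * a * n) := (le_abs_self s).trans (Real.abs_le_sqrt h)
    _ = √B * (a ^ ((1 : ℝ) / 2 - ε) * a ^ ε) * n ^ ((1 : ℝ) / 2) := by
      rw [← Real.rpow_add ha, sub_add_cancel, Real.sqrt_mul (by positivity),
        Real.sqrt_mul hB, Real.sqrt_eq_rpow a, Real.sqrt_eq_rpow n]
    _ ≤ √B * (a ^ ((1 : ℝ) / 2 - ε) * n ^ ε) * n ^ ((1 : ℝ) / 2) := by
      gcongr
    _ = √B * a ^ ((1 : ℝ) / 2 - ε) * n ^ ((1 : ℝ) / 2 + ε) := by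
      rw [add_comm _ ε, Real.rpow_add hn]
      ring

namespace NumberField

open FractionalIdeal

variable {K : Type*} [Field K] [NumberField K]

local notation "𝔡" => (differentIdeal ℤ (𝓞 K) : FractionalIdeal (𝓞 K)⁰ K)

lemma mem_dual_one_iff {x : K} :
    x ∈ dual ℤ ℚ (1 : FractionalIdeal (𝓞 K)⁰ K) ↔ ∀ γ : 𝓞 K, traceAddChar K (x * γ) = 1 := by
  rw [mem_dual (@one_ne_zero (FractionalIdeal (𝓞 K)⁰ K) _ _ _)]
  simp only [mem_one_iff, forall_exists_index, forall_apply_eq_imp_iff]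
  refine forall_congr' fun γ => ?_
  rw [traceAddChar_eq_one_iff, Algebra.traceForm_apply, RingHom.mem_range]
  simp only [algebraMap_int_eq, eq_intCast, eq_comm]

lemma dual_one_mul_differentIdeal : dual ℤ ℚ (1 : FractionalIdeal (𝓞 K)⁰ K) * 𝔡 = 1 := by
  rw [coeIdeal_differentIdeal ℤ ℚ]
  exact mul_inv_cancel₀ (dual_ne_zero ℤ ℚ (@one_ne_zero (FractionalIdeal (𝓞 K)⁰ K) _ _ _))

lemma spanSingleton_mul_le_dual_one_iff {w : K} {q : Ideal (𝓞 K)} :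
    spanSingleton (𝓞 K)⁰ w * (q : FractionalIdeal (𝓞 K)⁰ K) ≤ dual ℤ ℚ 1 ↔
      ∀ β ∈ q, traceAddChar K (w * β) = 1 := by
  refine ⟨fun h β hβ => ?_, fun h => mul_le.2 fun x hx y hy => ?_⟩
  · simpa using mem_dual_one_iff.1
      (h (mul_mem_mul (mem_spanSingleton_self _ w) (mem_coeIdeal_of_mem _ hβ))) 1
  · obtain ⟨z, rfl⟩ := (mem_spanSingleton _).1 hx
    obtain ⟨β, hβ, rfl⟩ := (mem_coeIdeal _).1 hy
    refine mem_dual_one_iff.2 fun γ => ?_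
    convert h (z * β * γ) (q.mul_mem_right _ (q.mul_mem_left _ hβ)) using 2
    simp only [Algebra.smul_def, map_mul]
    ring

lemma exists_coeIdeal_eq_spanSingleton_mul_differentIdeal_add {w : K} {q : Ideal (𝓞 K)}
    (hw : ∀ β ∈ q, traceAddChar K (w * β) = 1) :
    ∃ J : Ideal (𝓞 K), (J : FractionalIdeal (𝓞 K)⁰ K) = spanSingleton (𝓞 K)⁰ w * q * 𝔡 + q := by
  refine le_one_iff_exists_coeIdeal.1 ?_
  rw [← sup_eq_add]
  refine sup_le ?_ coeIdeal_le_one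
  calc spanSingleton (𝓞 K)⁰ w * (q : FractionalIdeal (𝓞 K)⁰ K) * 𝔡 ≤ dual ℤ ℚ 1 * 𝔡 := by
        gcongr
        exact spanSingleton_mul_le_dual_one_iff.2 hw
    _ = 1 := dual_one_mul_differentIdeal

noncomputable def quotientTraceChar (q : Ideal (𝓞 K)) (w : K)
    (hw : ∀ β ∈ q, traceAddChar K (w * β) = 1) : AddChar (𝓞 K ⧸ q) ℂ :=
  AddChar.liftQuotient q
    (((traceAddChar K).mulShift w).compAddMonoidHom (algebraMap (𝓞 K) K).toAddMonoidHom) hw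

@[simp]
lemma quotientTraceChar_mk {q : Ideal (𝓞 K)} {w : K} (hw : ∀ β ∈ q, traceAddChar K (w * β) = 1)
    (β : 𝓞 K) : quotientTraceChar q w hw (Ideal.Quotient.mk q β) = traceAddChar K (w * β) :=
  rfl

lemma mul_span_two_mul_le {q c J : Ideal (𝓞 K)} {w : K}
    (hc : (c : FractionalIdeal (𝓞 K)⁰ K) * spanSingleton (𝓞 K)⁰ (2 * w) ≤ dual ℤ ℚ 1)
    (hJ : (J : FractionalIdeal (𝓞 K)⁰ K) = spanSingleton (𝓞 K)⁰ w * q * 𝔡 + q) :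
    c * (Ideal.span {2} * J) ≤ q := by
  have hc2 : (c : FractionalIdeal (𝓞 K)⁰ K) * spanSingleton (𝓞 K)⁰ 2 ≤ 1 := by
    rw [← map_ofNat (algebraMap (𝓞 K) K), ← coeIdeal_span_singleton, ← coeIdeal_mul]
    exact coeIdeal_le_one
  rw [← coeIdeal_le_coeIdeal K, coeIdeal_mul, coeIdeal_mul, hJ, coeIdeal_span_singleton,
    map_ofNat]
  rw [← spanSingleton_mul_spanSingleton, ← mul_assoc] at hc
  set C : FractionalIdeal (𝓞 K)⁰ K := ↑c
  set Q : FractionalIdeal (𝓞 K)⁰ K := ↑q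
  set s₂ := spanSingleton (𝓞 K)⁰ (2 : K)
  calc C * (s₂ * (spanSingleton (𝓞 K)⁰ w * Q * 𝔡 + Q))
      = C * s₂ * spanSingleton (𝓞 K)⁰ w * 𝔡 * Q + C * s₂ * Q := by ring
    _ ≤ dual ℤ ℚ 1 * 𝔡 * Q + 1 * Q := by gcongr
    _ = Q := by rw [dual_one_mul_differentIdeal, one_mul, ← sup_eq_add, sup_idem]

noncomputable def traceDualIdeal (x : K) : Ideal (𝓞 K) :=
  (dual ℤ ℚ (1 : FractionalIdeal (𝓞 K)⁰ K) : Submodule (𝓞 K) K).comap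
    ((LinearMap.mulLeft (𝓞 K) x).comp (Algebra.linearMap (𝓞 K) K))

lemma mem_traceDualIdeal {x : K} {δ : 𝓞 K} :
    δ ∈ traceDualIdeal x ↔ x * δ ∈ dual ℤ ℚ (1 : FractionalIdeal (𝓞 K)⁰ K) :=
  Iff.rfl

lemma coeIdeal_traceDualIdeal_mul_le (x : K) :
    (traceDualIdeal x : FractionalIdeal (𝓞 K)⁰ K) * spanSingleton (𝓞 K)⁰ x ≤ dual ℤ ℚ 1 :=
  mul_le.2 fun y hy z hz => by
    obtain ⟨δ, hδ, rfl⟩ := (mem_coeIdeal _).1 hy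
    obtain ⟨t, rfl⟩ := (mem_spanSingleton _).1 hz
    have h := Submodule.smul_mem (dual ℤ ℚ (1 : FractionalIdeal (𝓞 K)⁰ K) : Submodule (𝓞 K) K)
      t (mem_traceDualIdeal.1 hδ)
    rw [Algebra.smul_def, mem_coe] at h
    convert h using 1
    rw [Algebra.smul_def]
    ring

theorem natCard_setOf_mulShift_two_eq_zero_le {q : Ideal (𝓞 K)} (hq : q ≠ ⊥) {w : K}
    (hw : ∀ β ∈ q, traceAddChar K (w * β) = 1) {J : Ideal (𝓞 K)}
    (hJ : (J : FractionalIdeal (𝓞 K)⁰ K) = spanSingleton (𝓞 K)⁰ w * q * 𝔡 + q) :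
    Nat.card {y | (quotientTraceChar q w hw).mulShift (2 * y) = 0} ≤
      Ideal.absNorm (Ideal.span {2} * J) := by
  have : Finite (𝓞 K ⧸ q) := Ideal.finiteQuotientOfFreeOfNeBot q hq
  have hqc : q ≤ traceDualIdeal (2 * w) := fun δ hδ => by
    rw [mem_traceDualIdeal, mul_assoc, ← map_ofNat (algebraMap (𝓞 K) K), ← Algebra.smul_def]
    exact Submodule.smul_mem _ _ (spanSingleton_mul_le_dual_one_iff.2 hw
      (mul_mem_mul (mem_spanSingleton_self _ w) (mem_coeIdeal_of_mem _ hδ)))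
  have hT : {y | (quotientTraceChar q w hw).mulShift (2 * y) = 0} ⊆
      Submodule.map q.mkQ (traceDualIdeal (2 * w)) := by
    rintro y hy
    obtain ⟨δ, rfl⟩ := Ideal.Quotient.mk_surjective y
    refine ⟨δ, mem_traceDualIdeal.2 (mem_dual_one_iff.2 fun γ => ?_), rfl⟩
    have := DFunLike.congr_fun hy (Ideal.Quotient.mk q γ)
    rw [AddChar.mulShift_apply, AddChar.zero_apply, ← map_ofNat (Ideal.Quotient.mk q),
      ← map_mul, ← map_mul, quotientTraceChar_mk] at this
    rw [← this]
    congr 1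
    simp only [map_mul, map_ofNat]
    ring
  have hJ0 : Ideal.span {2} * J ≠ ⊥ := mul_ne_zero (by simp)
    (ne_bot_of_le_ne_bot hq ((coeIdeal_le_coeIdeal K).1 (hJ ▸ le_add_self)))
  exact (Nat.card_mono (Set.toFinite _) hT).trans (Ideal.natCard_map_mkQ_le_absNorm hq hqc
    (mul_span_two_mul_le (coeIdeal_traceDualIdeal_mul_le _) hJ) hJ0)

theorem sq_norm_sum_quotientTraceChar_sq_le {q : Ideal (𝓞 K)} [Fintype (𝓞 K ⧸ q)] (hq : q ≠ ⊥)
    {w : K} (hw : ∀ β ∈ q, traceAddChar K (w * β) = 1) {J : Ideal (𝓞 K)}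
    (hJ : (J : FractionalIdeal (𝓞 K)⁰ K) = spanSingleton (𝓞 K)⁰ w * q * 𝔡 + q) :
    ‖∑ x, quotientTraceChar q w hw (x ^ 2)‖ ^ 2 ≤
      Ideal.absNorm (Ideal.span {(2 : 𝓞 K)}) * Ideal.absNorm J * Ideal.absNorm q := by
  calc _ ≤ (Nat.card (𝓞 K ⧸ q) : ℝ) *
        Nat.card {y | (quotientTraceChar q w hw).mulShift (2 * y) = 0} :=
        AddChar.sq_norm_sum_apply_sq_le _
    _ ≤ (Ideal.absNorm q : ℝ) * Ideal.absNorm (Ideal.span {(2 : 𝓞 K)} * J) := by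
        rw [Ideal.absNorm_apply q, Submodule.cardQuot_apply]
        gcongr
        exact natCard_setOf_mulShift_two_eq_zero_le hq hw hJ
    _ = (Ideal.absNorm (Ideal.span {(2 : 𝓞 K)}) : ℝ) * Ideal.absNorm J * Ideal.absNorm q := by
        push_cast [_root_.map_mul]
        ring

theorem finsum_traceAddChar_sq_eq_sum {q : Ideal (𝓞 K)} [Fintype (𝓞 K ⧸ q)] {w : K}
    (hw : ∀ β ∈ q, traceAddChar K (w * β) = 1) {r : 𝓞 K ⧸ q → 𝓞 K}
    (hr : ∀ x, Ideal.Quotient.mk q (r x) = x) :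
    ∑ᶠ x, traceAddChar K (w * algebraMap (𝓞 K) K (r x) ^ 2) =
      ∑ x, quotientTraceChar q w hw (x ^ 2) := by
  rw [finsum_eq_sum_of_fintype]
  refine Finset.sum_congr rfl fun x _ => ?_
  conv_rhs => rw [← hr x, ← map_pow, quotientTraceChar_mk]
  rfl

end NumberField

theorem stmt_0_general {K : Type*} [Field K] [NumberField K]
    (ε : ℝ) (hε : 0 < ε) :
    ∃ C : ℝ, 0 < C ∧ ∀ (q : Ideal (𝓞 K)), q ≠ 0 → ∀ w : K,
      (∀ β ∈ q, ∃ n : ℤ, Algebra.trace ℚ K (w * algebraMap (𝓞 K) K β) = n) →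
      ∀ r : (𝓞 K ⧸ q) → 𝓞 K, (∀ x, Ideal.Quotient.mk q (r x) = x) →
      ‖∑ᶠ x : 𝓞 K ⧸ q,
          Complex.exp (2 * Real.pi * Complex.I *
            ((Algebra.trace ℚ K (w * algebraMap (𝓞 K) K (r x) ^ 2) : ℚ) : ℂ))‖
        ≤ C * ((FractionalIdeal.absNorm
              (FractionalIdeal.spanSingleton (𝓞 K)⁰ w * (q : FractionalIdeal (𝓞 K)⁰ K) *
                  (differentIdeal ℤ (𝓞 K) : FractionalIdeal (𝓞 K)⁰ K) +
                (q : FractionalIdeal (𝓞 K)⁰ K)) : ℝ) ^ ((1 : ℝ) / 2 - ε)) *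
          (Ideal.absNorm q : ℝ) ^ ((1 : ℝ) / 2 + ε) := by
  have h2 : Ideal.absNorm (Ideal.span {(2 : 𝓞 K)}) ≠ 0 := Ideal.absNorm_eq_zero_iff.not.2 (by simp)
  refine ⟨√(Ideal.absNorm (Ideal.span {(2 : 𝓞 K)}) : ℝ), by positivity, fun q hq w hw r hr => ?_⟩
  have hwψ (β) (hβ : β ∈ q) : traceAddChar K (w * β) = 1 := traceAddChar_eq_one_iff.2 (hw β hβ)
  obtain ⟨J, hJ⟩ := exists_coeIdeal_eq_spanSingleton_mul_differentIdeal_add hwψ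
  have hqJ : q ≤ J := (FractionalIdeal.coeIdeal_le_coeIdeal K).1 (hJ ▸ le_add_self)
  have : Fintype (𝓞 K ⧸ q) := @Fintype.ofFinite _ (Ideal.finiteQuotientOfFreeOfNeBot q hq)
  simp_rw [← traceAddChar_apply]
  rw [finsum_traceAddChar_sq_eq_sum hwψ hr, ← hJ, FractionalIdeal.coeIdeal_absNorm,
    Rat.cast_natCast]
  refine Real.le_sqrt_mul_rpow_mul_rpow (by positivity) ?_ ?_ hε.le
    (sq_norm_sum_quotientTraceChar_sq_le hq hwψ hJ)
  · exact Nat.cast_pos.2 (Nat.pos_of_ne_zero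
      (Ideal.absNorm_eq_zero_iff.not.2 (ne_bot_of_le_ne_bot hq hqJ)))
  · exact Nat.cast_le.2 (Nat.le_of_dvd (Nat.pos_of_ne_zero (Ideal.absNorm_eq_zero_iff.not.2 hq))
      (Ideal.absNorm_dvd_absNorm_of_le hqJ))

/-- Lemma 2.1: bound for the quadratic exponential sum
`∑_{β mod q} e^{2πi Tr(wβ²)}` for `w` in the trace-dual of `q`. -/
theorem stmt_0 {K : Type*} [Field K] [NumberField K]
    (hdeg : Module.finrank ℚ K = 2)
    (himag : ∀ v : NumberField.InfinitePlace K, v.IsComplex)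
    (ε : ℝ) (hε : 0 < ε) :
    ∃ C : ℝ, 0 < C ∧ ∀ (q : Ideal (𝓞 K)), q ≠ 0 → ∀ w : K,
      (∀ β ∈ q, ∃ n : ℤ, Algebra.trace ℚ K (w * algebraMap (𝓞 K) K β) = n) →
      ∀ r : (𝓞 K ⧸ q) → 𝓞 K, (∀ x, Ideal.Quotient.mk q (r x) = x) →
      ‖∑ᶠ x : 𝓞 K ⧸ q,
          Complex.exp (2 * Real.pi * Complex.I *
            ((Algebra.trace ℚ K (w * algebraMap (𝓞 K) K (r x) ^ 2) : ℚ) : ℂ))‖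
        ≤ C * ((FractionalIdeal.absNorm
              (FractionalIdeal.spanSingleton (𝓞 K)⁰ w * (q : FractionalIdeal (𝓞 K)⁰ K) *
                  (differentIdeal ℤ (𝓞 K) : FractionalIdeal (𝓞 K)⁰ K) +
                (q : FractionalIdeal (𝓞 K)⁰ K)) : ℝ) ^ ((1 : ℝ) / 2 - ε)) *
          (Ideal.absNorm q : ℝ) ^ ((1 : ℝ) / 2 + ε) :=
  stmt_0_general ε hε
end

section
/- Let K ⊂ ℂ be an imaginary quadratic field and let a be a nonzero fractional ideal of K, viewed as a lattice in ℂ ≅ ℝ². Then there exists an ℝ-linear map φ : ℂ → ℂ with φ(ℤ[i]) = a such that for all v ∈ ℂ one has c₁ · N(a) · |v|² ≤ |φ(v)|² ≤ c₂ · N(a) · |v|², where c₁, c₂ > 0 are constants depending only on K, and N(a) is the absolute norm of a. -/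
open NumberField
open scoped nonZeroDivisors Classical

/-!
There are finitely many ideal classes, so it suffices to parametrize one representative `J` of
each class and then transport. A `ℤ`-basis of `J` is a `ℚ`-basis of `K`, and since `ι` is not
real its image spans `ℂ` over `ℝ`; the resulting `ℝ`-linear automorphism of `ℂ` sends `ℤ[i]` onto
`ι(J)` and distorts `|·|²` by bounded factors. Any other ideal of the class is `a = xJ`, and
multiplication by `ι x` multiplies `|·|²` by `|ι x|² = |N(x)| = N(a) / N(J)`, so the constants
obtained for the finitely many `J`, divided by `N(J)`, work for all `a`.
-/

open Complex

lemma AddMonoidHom.image_span_int {M N : Type*} [AddCommGroup M] [AddCommGroup N] (f : M →+ N)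
    (s : Set M) : f '' Submodule.span ℤ s = Submodule.span ℤ (f '' s) := by
  simpa using congrArg SetLike.coe (Submodule.map_span f.toIntLinearMap s)

lemma Complex.setOf_int_add_int_mul_I_eq_span :
    {z : ℂ | ∃ m n : ℤ, z = m + n * I} = Submodule.span ℤ (Set.range basisOneI) := by
  ext z
  simp only [Set.mem_ofPred_eq, SetLike.mem_coe, coe_basisOneI, Matrix.range_cons,
    Matrix.range_empty, Set.union_empty, Set.union_singleton, Set.pair_comm,
    Submodule.mem_span_pair, zsmul_eq_mul, mul_one, eq_comm (a := z)]

lemma Complex.span_one_eq_top_of_im_ne_zero {z : ℂ} (hz : z.im ≠ 0) :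
    Submodule.span ℝ {1, z} = ⊤ := by
  refine Submodule.eq_top_iff'.mpr fun w => Submodule.mem_span_pair.mpr ?_
  refine ⟨w.re - w.im / z.im * z.re, w.im / z.im, ?_⟩
  apply Complex.ext
  · simp
  · simp
    field_simp

namespace NumberField.ComplexEmbedding

variable {K : Type*} [Field K] {ι : K →+* ℂ}

lemma exists_im_ne_zero (hι : ¬ IsReal ι) : ∃ x, (ι x).im ≠ 0 := by
  contrapose! hι
  refine isReal_iff.mpr (RingHom.ext fun x => ?_)
  exact Complex.conj_eq_iff_im.mpr (hι x)

lemma span_real_range_comp_basis_eq_top [CharZero K] (hι : ¬ IsReal ι) {κ : Type*}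
    (b : Module.Basis κ ℚ K) :
    Submodule.span ℝ (Set.range (ι ∘ b)) = ⊤ := by
  have hιK : ∀ x, ι x ∈ Submodule.span ℝ (Set.range (ι ∘ b)) := by
    intro x
    apply Submodule.span_subset_span ℚ ℝ
    rw [Set.range_comp, ← show ⇑ι.toRatAlgHom.toLinearMap = ι from rfl, ← Submodule.map_span,
      b.span_eq]
    exact ⟨x, Submodule.mem_top, rfl⟩
  obtain ⟨x, hx⟩ := exists_im_ne_zero hι
  rw [eq_top_iff, ← Complex.span_one_eq_top_of_im_ne_zero hx, Submodule.span_le,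
    Set.insert_subset_iff, Set.singleton_subset_iff, ← map_one ι]
  exact ⟨hιK 1, hιK x⟩

end NumberField.ComplexEmbedding

lemma LinearEquiv.exists_normSq_bounds (φ : ℂ ≃ₗ[ℝ] ℂ) :
    ∃ c₁ c₂ : ℝ, 0 < c₁ ∧ 0 < c₂ ∧
      ∀ v, c₁ * normSq v ≤ normSq (φ v) ∧ normSq (φ v) ≤ c₂ * normSq v := by
  let ψ := φ.toContinuousLinearEquiv
  obtain ⟨C, hC, hψ⟩ := (ψ : ℂ →L[ℝ] ℂ).bound
  obtain ⟨D, hD, hψsymm⟩ := (ψ.symm : ℂ →L[ℝ] ℂ).bound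
  refine ⟨(D ^ 2)⁻¹, C ^ 2, by positivity, by positivity, fun v => ?_⟩
  simp only [normSq_eq_norm_sq]
  constructor
  · have : ‖v‖ ≤ D * ‖φ v‖ := by simpa [ψ] using hψsymm (φ v)
    rw [inv_mul_le_iff₀ (by positivity), ← mul_pow]
    gcongr
  · have : ‖φ v‖ ≤ C * ‖v‖ := hψ v
    rw [← mul_pow]
    gcongr

section ImaginaryQuadratic

variable {K : Type*} [Field K] [NumberField K] (ι : K →+* ℂ)

lemma exists_linearEquiv_image_gaussianIntegers_eq (hdeg : Module.finrank ℚ K = 2)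
    (hι : ¬ ComplexEmbedding.IsReal ι) (J : (FractionalIdeal (𝓞 K)⁰ K)ˣ) :
    ∃ φ : ℂ ≃ₗ[ℝ] ℂ, φ '' {z : ℂ | ∃ m n : ℤ, z = m + n * I} =
      ι '' (((J : FractionalIdeal (𝓞 K)⁰ K) : Submodule (𝓞 K) K) : Set K) := by
  let b := basisOfFractionalIdeal K J
  have hcard : Fintype.card (Module.Free.ChooseBasisIndex ℤ J) = Module.finrank ℝ ℂ := by
    rw [← Module.finrank_eq_card_chooseBasisIndex, fractionalIdeal_rank, RingOfIntegers.rank,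
      hdeg, finrank_real_complex]
  let v := basisOfTopLeSpanOfCardEqFinrank (ι ∘ b)
    (ComplexEmbedding.span_real_range_comp_basis_eq_top hι b).ge hcard
  let e : Fin 2 ≃ Module.Free.ChooseBasisIndex ℤ J :=
    Fintype.equivOfCardEq (by rw [hcard, Fintype.card_fin, finrank_real_complex])
  refine ⟨basisOneI.equiv v e, ?_⟩
  have hb : (((J : FractionalIdeal (𝓞 K)⁰ K) : Submodule (𝓞 K) K) : Set K) =
      Submodule.span ℤ (Set.range b) := by
    ext x
    exact (mem_span_basisOfFractionalIdeal K).symm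
  calc (basisOneI.equiv v e) '' {z : ℂ | ∃ m n : ℤ, z = m + n * I}
      = Submodule.span ℤ ((basisOneI.equiv v e) '' Set.range basisOneI) := by
        rw [setOf_int_add_int_mul_I_eq_span]
        exact (basisOneI.equiv v e).toLinearMap.toAddMonoidHom.image_span_int _
    _ = Submodule.span ℤ (ι '' Set.range b) := by
        have : (basisOneI.equiv v e) ∘ basisOneI = (ι ∘ b) ∘ e := by
          funext i
          rw [Function.comp_apply, Module.Basis.equiv_apply, coe_basisOfTopLeSpanOfCardEqFinrank]
          rfl
        rw [← Set.range_comp, ← Set.range_comp, this, EquivLike.range_comp]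
    _ = _ := by
        rw [hb]
        exact (ι.toAddMonoidHom.image_span_int _).symm

lemma abs_norm_eq_normSq [IsTotallyComplex K] (hdeg : Module.finrank ℚ K = 2) (x : K) :
    ((|Algebra.norm ℚ x| : ℚ) : ℝ) = normSq (ι x) := by
  have : Subsingleton (InfinitePlace K) := by
    rw [← Fintype.card_le_one_iff_subsingleton,
      InfinitePlace.card_eq_nrRealPlaces_add_nrComplexPlaces]
    have := IsTotallyComplex.finrank K
    simp only [IsTotallyComplex.nrRealPlaces_eq_zero]
    omega
  rw [← InfinitePlace.prod_eq_abs_norm, Fintype.prod_subsingleton _ (InfinitePlace.mk ι),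
    IsTotallyComplex.mult_eq, InfinitePlace.apply, normSq_eq_norm_sq]

lemma absNorm_spanSingleton_mul [IsTotallyComplex K] (hdeg : Module.finrank ℚ K = 2) (x : K)
    (a : FractionalIdeal (𝓞 K)⁰ K) :
    (FractionalIdeal.absNorm (FractionalIdeal.spanSingleton (𝓞 K)⁰ x * a) : ℝ) =
      normSq (ι x) * FractionalIdeal.absNorm a := by
  rw [map_mul, FractionalIdeal.absNorm_span_singleton, Rat.cast_mul, abs_norm_eq_normSq ι hdeg]

def IsIdealParametrization (c₁ c₂ : ℝ) (a : FractionalIdeal (𝓞 K)⁰ K) (φ : ℂ →ₗ[ℝ] ℂ) : Prop :=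
  φ '' {z : ℂ | ∃ m n : ℤ, z = m + n * I} = ι '' ((a : Submodule (𝓞 K) K) : Set K) ∧
    ∀ v : ℂ, c₁ * (FractionalIdeal.absNorm a : ℝ) * normSq v ≤ normSq (φ v) ∧
      normSq (φ v) ≤ c₂ * (FractionalIdeal.absNorm a : ℝ) * normSq v

variable {ι}

lemma IsIdealParametrization.mono {c₁ c₂ c₁' c₂' : ℝ} {a : FractionalIdeal (𝓞 K)⁰ K}
    {φ : ℂ →ₗ[ℝ] ℂ} (h : IsIdealParametrization ι c₁ c₂ a φ) (h₁ : c₁' ≤ c₁) (h₂ : c₂ ≤ c₂') :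
    IsIdealParametrization ι c₁' c₂' a φ := by
  refine ⟨h.1, fun v => ⟨le_trans ?_ (h.2 v).1, (h.2 v).2.trans ?_⟩⟩ <;>
  · have : (0 : ℝ) ≤ FractionalIdeal.absNorm a := by exact_mod_cast FractionalIdeal.absNorm_nonneg a
    gcongr
    exact normSq_nonneg v

lemma IsIdealParametrization.spanSingleton_mul [IsTotallyComplex K]
    (hdeg : Module.finrank ℚ K = 2) {c₁ c₂ : ℝ} {a : FractionalIdeal (𝓞 K)⁰ K}
    {φ : ℂ →ₗ[ℝ] ℂ} (h : IsIdealParametrization ι c₁ c₂ a φ) (x : K) :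
    IsIdealParametrization ι c₁ c₂ (FractionalIdeal.spanSingleton (𝓞 K)⁰ x * a)
      (LinearMap.mulLeft ℝ (ι x) ∘ₗ φ) := by
  have hx : (((FractionalIdeal.spanSingleton (𝓞 K)⁰ x * a : FractionalIdeal (𝓞 K)⁰ K) :
      Submodule (𝓞 K) K) : Set K) = (x * ·) '' (a : Submodule (𝓞 K) K) := by
    ext y
    change y ∈ FractionalIdeal.spanSingleton _ x * a ↔ _
    simp only [FractionalIdeal.mem_singleton_mul, Set.mem_image, eq_comm (a := y)]
    rfl
  refine ⟨?_, fun v => ?_⟩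
  · rw [LinearMap.coe_comp, Set.image_comp, h.1, hx, Set.image_image, Set.image_image]
    simp
  · have hN := absNorm_spanSingleton_mul ι hdeg x a
    simp only [LinearMap.coe_comp, Function.comp_apply, LinearMap.mulLeft_apply]
    rw [hN, normSq_mul]
    constructor
    · calc c₁ * (normSq (ι x) * FractionalIdeal.absNorm a) * normSq v
          = normSq (ι x) * (c₁ * FractionalIdeal.absNorm a * normSq v) := by ring
        _ ≤ normSq (ι x) * normSq (φ v) :=
            mul_le_mul_of_nonneg_left (h.2 v).1 (normSq_nonneg _)
    · calc normSq (ι x) * normSq (φ v)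
          ≤ normSq (ι x) * (c₂ * FractionalIdeal.absNorm a * normSq v) :=
            mul_le_mul_of_nonneg_left (h.2 v).2 (normSq_nonneg _)
        _ = c₂ * (normSq (ι x) * FractionalIdeal.absNorm a) * normSq v := by ring

lemma exists_isIdealParametrization (hdeg : Module.finrank ℚ K = 2)
    (hι : ¬ ComplexEmbedding.IsReal ι) (J : (FractionalIdeal (𝓞 K)⁰ K)ˣ) :
    ∃ c₁ c₂ : ℝ, 0 < c₁ ∧ 0 < c₂ ∧ ∃ φ, IsIdealParametrization ι c₁ c₂ J φ := by
  obtain ⟨φ, hφ⟩ := exists_linearEquiv_image_gaussianIntegers_eq ι hdeg hι J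
  obtain ⟨d₁, d₂, hd₁, hd₂, hd⟩ := φ.exists_normSq_bounds
  have hN : (0 : ℝ) < FractionalIdeal.absNorm (J : FractionalIdeal (𝓞 K)⁰ K) := by
    exact_mod_cast (FractionalIdeal.absNorm_nonneg _).lt_of_ne'
      (FractionalIdeal.absNorm_eq_zero_iff.not.mpr J.ne_zero)
  refine ⟨d₁ / _, d₂ / _, div_pos hd₁ hN, div_pos hd₂ hN, φ, hφ, fun v => ?_⟩
  rw [div_mul_cancel₀ _ hN.ne', div_mul_cancel₀ _ hN.ne']
  exact hd v

end ImaginaryQuadratic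

lemma ClassGroup.mk_surjective {R K : Type*} [CommRing R] [IsDomain R] [Field K] [Algebra R K]
    [IsFractionRing R K] : Function.Surjective (ClassGroup.mk (R := R) K) :=
  ClassGroup.induction K fun I => ⟨I, rfl⟩

lemma ClassGroup.exists_eq_spanSingleton_mul_of_mk_eq {R K : Type*} [CommRing R] [IsDomain R]
    [Field K] [Algebra R K] [IsFractionRing R K] {I J : (FractionalIdeal R⁰ K)ˣ}
    (h : ClassGroup.mk K I = ClassGroup.mk K J) :
    ∃ x : K, (I : FractionalIdeal R⁰ K) = FractionalIdeal.spanSingleton R⁰ x * J := by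
  have : ClassGroup.mk K (I * J⁻¹) = 1 := by rw [map_mul, map_inv, h, mul_inv_cancel]
  obtain ⟨x, hx⟩ := (FractionalIdeal.isPrincipal_iff _).mp (ClassGroup.mk_eq_one_iff.mp this)
  refine ⟨x, ?_⟩
  rw [← hx, Units.val_mul, mul_assoc, ← Units.val_mul, inv_mul_cancel, Units.val_one, mul_one]

/-- Lemma 2.3: a fractional ideal `a` of an imaginary quadratic field
`K ⊂ ℂ` is the image of `ℤ[i]` under an `ℝ`-linear map `φ : ℂ → ℂ` satisfying
`c₁ N(a) |v|² ≤ |φ(v)|² ≤ c₂ N(a) |v|²` with constants depending only on `K`. -/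
theorem stmt_2 {K : Type*} [Field K] [NumberField K] (ι : K →+* ℂ)
    (hdeg : Module.finrank ℚ K = 2)
    (himag : ∀ v : NumberField.InfinitePlace K, v.IsComplex) :
    ∃ c₁ c₂ : ℝ, 0 < c₁ ∧ 0 < c₂ ∧
      ∀ a : FractionalIdeal (𝓞 K)⁰ K, a ≠ 0 →
        ∃ φ : ℂ →ₗ[ℝ] ℂ,
          φ '' {z : ℂ | ∃ m n : ℤ, z = (m : ℂ) + (n : ℂ) * Complex.I} =
            ι '' ((a : Submodule (𝓞 K) K) : Set K) ∧
          ∀ v : ℂ,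
            c₁ * (FractionalIdeal.absNorm a : ℝ) * Complex.normSq v ≤ Complex.normSq (φ v) ∧
            Complex.normSq (φ v) ≤ c₂ * (FractionalIdeal.absNorm a : ℝ) * Complex.normSq v := by
  have : IsTotallyComplex K := ⟨himag⟩
  have hι := IsTotallyComplex.complexEmbedding_not_isReal ι
  choose rep hrep using ClassGroup.mk_surjective (R := 𝓞 K) (K := K)
  choose c₁ c₂ hc₁ hc₂ φ hφ using fun c => exists_isIdealParametrization hdeg hι (rep c)
  obtain ⟨cmin, hmin⟩ := Finite.exists_min c₁
  obtain ⟨cmax, hmax⟩ := Finite.exists_max c₂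
  refine ⟨c₁ cmin, c₂ cmax, hc₁ cmin, hc₂ cmax, fun a ha => ?_⟩
  let c := ClassGroup.mk K (Units.mk0 a ha)
  obtain ⟨x, hx⟩ := ClassGroup.exists_eq_spanSingleton_mul_of_mk_eq (hrep c).symm
  rw [Units.val_mk0] at hx
  exact ⟨_, hx ▸ ((hφ c).mono (hmin c) (hmax c)).spanSingleton_mul hdeg x⟩
end

section
/- Let K be an imaginary quadratic field, a and q nonzero ideals of O_K with a + q = O_K, and α ∈ O_K with αO_K + q = O_K. If t < 4·√(N(q))·N(a), then ∑_{ρ mod q, ρ coprime to q} #{z ∈ a : z ≡ αρ² (mod q), |z|² ≤ t} = O(2^{ω_K(q)} √(N(q))), where the implied constant depends only on K. -/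
/-!
Swapping the order of summation, the sum counts pairs `(z, ρ)`, so it is at most the number of
`z ∈ a` with `|z|² ≤ t` times the largest number of units `ρ` with `αρ² ≡ z (mod q)`.
Two such `ρ` differ by a square root of `1` modulo `q`. By the Chinese remainder theorem these
can be counted modulo each prime power `p^e ∥ q`, where `(u - 1)(u + 1) ∈ p^e` forces
`2(u - 1)` or `2(u + 1)` into `p^e` (compare `p`-adic valuations): `u` is `±1` up to `2`-torsion,
and the `2`-torsion of `𝓞 K ⧸ q` has at most `N(2) = 4` elements.
In an imaginary quadratic field `|z|² = |N(z)| ≥ N(a)` for `0 ≠ z ∈ a`, so the grid of squares of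
side `√(N(a)/2)` separates the points of `a`, and the disc `|z|² ≤ t < 4 √N(q) N(a)` meets
`O(√N(q))` of these squares.
-/

open NumberField
open scoped nonZeroDivisors Classical

/-- Number of distinct prime ideal divisors of an ideal of `𝓞 K`. -/
noncomputable def omegaI {K : Type*} [Field K] [NumberField K] (I : Ideal (𝓞 K)) : ℕ :=
  (UniqueFactorizationMonoid.factors I).toFinset.card

set_option synthInstance.maxHeartbeats 800000

theorem Valuation.map_mul_le_or_of_eq_add {R Γ₀ : Type*} [CommRing R]
    [LinearOrderedCommMonoidWithZero Γ₀] (v : Valuation R Γ₀) {x y c : R} (h : y = x + c) :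
    v (c * x) ≤ v (x * y) ∨ v (c * y) ≤ v (x * y) := by
  rcases le_or_gt (v c) (v y) with hcy | hyc
  · left
    rw [v.map_mul, v.map_mul, mul_comm (v x)]
    exact mul_le_mul_left hcy _
  · right
    have hx : v x = v c := by
      rw [show x = y - c by rw [h]; ring]
      exact v.map_sub_eq_of_lt_right hyc
    rw [v.map_mul, v.map_mul, hx]

theorem Ideal.mul_mem_pow_or_of_eq_add {R : Type*} [CommRing R] [IsDedekindDomain R]
    {p : Ideal R} (hp : Prime p) (e : ℕ) {x y c : R} (h : y = x + c)
    (hxy : x * y ∈ p ^ e) : c * x ∈ p ^ e ∨ c * y ∈ p ^ e := by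
  let v : IsDedekindDomain.HeightOneSpectrum R := ⟨p, Ideal.isPrime_of_prime hp, hp.ne_zero⟩
  rw [← v.intValuation_le_pow_iff_mem] at hxy
  rw [← v.intValuation_le_pow_iff_mem, ← v.intValuation_le_pow_iff_mem]
  exact (v.intValuation.map_mul_le_or_of_eq_add h).imp hxy.trans' hxy.trans'

theorem Ideal.Quotient.two_mul_sub_one_eq_zero_or_of_sq_eq_one {R : Type*} [CommRing R]
    [IsDedekindDomain R] {P : Ideal R} (hP : Prime P) (e : ℕ) {u : R ⧸ P ^ e} (hu : u ^ 2 = 1) :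
    2 * (u - 1) = 0 ∨ 2 * (u + 1) = 0 := by
  obtain ⟨x, rfl⟩ := Ideal.Quotient.mk_surjective u
  have hx : (x - 1) * (x + 1) ∈ P ^ e := by
    rw [← Ideal.Quotient.eq_zero_iff_mem, map_mul, map_sub, map_add, map_one]
    linear_combination hu
  rcases Ideal.mul_mem_pow_or_of_eq_add hP e (by ring : x + 1 = x - 1 + 2) hx with h | h
  · left
    simpa [map_ofNat] using Ideal.Quotient.eq_zero_iff_mem.mpr h
  · right
    simpa [map_ofNat] using Ideal.Quotient.eq_zero_iff_mem.mpr h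

theorem card_sq_eq_one_le_two_mul {A : Type*} [CommRing A] [Finite A]
    (h : ∀ u : A, u ^ 2 = 1 → 2 * (u - 1) = 0 ∨ 2 * (u + 1) = 0) :
    Nat.card {u : A // u ^ 2 = 1} ≤ 2 * Nat.card {y : A // 2 * y = 0} := by
  let f : {u : A // u ^ 2 = 1} → {y : A // 2 * y = 0} ⊕ {y : A // 2 * y = 0} := fun u =>
    if hu : 2 * (u.1 - 1) = 0 then .inl ⟨_, hu⟩ else .inr ⟨_, (h u.1 u.2).resolve_left hu⟩
  have hf : Function.Injective f := by
    intro u w huw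
    simp only [f] at huw
    split_ifs at huw <;> simpa [Subtype.ext_iff] using huw
  calc _ ≤ Nat.card _ := Nat.card_le_card_of_injective f hf
    _ = _ := by rw [Nat.card_sum, two_mul]

theorem Pi.card_sq_eq_one_le {ι : Type*} [Fintype ι] {A : ι → Type*}
    [∀ i, CommRing (A i)] [∀ i, Finite (A i)]
    (h : ∀ i, ∀ u : A i, u ^ 2 = 1 → 2 * (u - 1) = 0 ∨ 2 * (u + 1) = 0) :
    Nat.card {u : ∀ i, A i // u ^ 2 = 1} ≤
      2 ^ Fintype.card ι * Nat.card {y : ∀ i, A i // 2 * y = 0} := by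
  have hsq : Nat.card {u : ∀ i, A i // u ^ 2 = 1} = ∏ i, Nat.card {u : A i // u ^ 2 = 1} := by
    rw [← Nat.card_pi]
    exact Nat.card_congr ((Equiv.subtypeEquivRight fun u => by simp [funext_iff]).trans
      (Equiv.subtypePiEquivPi (p := fun _ u => u ^ 2 = 1)))
  have htors : Nat.card {y : ∀ i, A i // 2 * y = 0} = ∏ i, Nat.card {y : A i // 2 * y = 0} := by
    rw [← Nat.card_pi]
    exact Nat.card_congr ((Equiv.subtypeEquivRight fun y => by simp [funext_iff]).trans
      (Equiv.subtypePiEquivPi (p := fun _ y => 2 * y = 0)))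
  rw [hsq, htors, ← Finset.card_univ, ← Finset.prod_const, ← Finset.prod_mul_distrib]
  exact Finset.prod_le_prod' fun i _ => card_sq_eq_one_le_two_mul (h i)

open UniqueFactorizationMonoid in
theorem Ideal.card_sq_eq_one_le {R : Type*} [CommRing R] [IsDedekindDomain R] {q : Ideal R}
    (hq : q ≠ ⊥) [Finite (R ⧸ q)] :
    Nat.card {u : R ⧸ q // u ^ 2 = 1} ≤
      2 ^ (factors q).toFinset.card * Nat.card {y : R ⧸ q // 2 * y = 0} := by
  let e := IsDedekindDomain.quotientEquivPiFactors hq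
  have : Finite (∀ P : (factors q).toFinset, R ⧸ (P : Ideal R) ^ (factors q).count ↑P) :=
    Finite.of_equiv _ e.toEquiv
  have (P : (factors q).toFinset) : Finite (R ⧸ (P : Ideal R) ^ (factors q).count ↑P) :=
    Finite.of_surjective
      (fun f : ∀ Q : (factors q).toFinset, R ⧸ (Q : Ideal R) ^ (factors q).count ↑Q => f P)
      (Function.surjective_eval P)
  have hsq := Pi.card_sq_eq_one_le fun (P : (factors q).toFinset) _ =>
    Ideal.Quotient.two_mul_sub_one_eq_zero_or_of_sq_eq_one
      (prime_of_factor _ (Multiset.mem_toFinset.mp P.2)) ((factors q).count ↑P)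
  rw [Fintype.card_coe] at hsq
  convert hsq using 1
  · exact Nat.card_congr (e.toEquiv.subtypeEquiv fun u => by simp [← map_pow])
  · congr 1
    exact Nat.card_congr (e.toEquiv.subtypeEquiv fun y => by simp [← map_ofNat e 2, ← map_mul])

theorem AddMonoidHom.card_ker_eq_index_range {G : Type*} [AddCommGroup G] [Finite G]
    (f : G →+ G) : Nat.card f.ker = f.range.index := by
  have hG := f.ker.card_mul_index
  rw [AddSubgroup.index_ker, ← f.range.card_mul_index, mul_comm] at hG
  exact Nat.eq_of_mul_eq_mul_left Nat.card_pos hG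

theorem card_mul_eq_zero_eq_card_quotient {R : Type*} [CommRing R] [Finite R] (r : R) :
    Nat.card {y : R // r * y = 0} = Nat.card (R ⧸ Ideal.span {r}) := by
  have hrange : (AddMonoidHom.mulLeft r).range = (Ideal.span {r}).toAddSubgroup := by
    ext y
    simp [Ideal.mem_span_singleton', mul_comm]
  rw [← Submodule.cardQuot_apply, Submodule.cardQuot, ← hrange,
    ← AddMonoidHom.card_ker_eq_index_range]
  rfl

theorem Ideal.card_natCast_mul_eq_zero_le {S : Type*} [CommRing S] [IsDedekindDomain S]
    [Module.Free ℤ S] [Module.Finite ℤ S] {q : Ideal S} (hq : q ≠ ⊥)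
    {n : ℕ} (hn : n ≠ 0) :
    Nat.card {y : S ⧸ q // (n : S ⧸ q) * y = 0} ≤ n ^ Module.finrank ℤ S := by
  have := Ideal.finiteQuotientOfFreeOfNeBot q hq
  have hmap : (Ideal.span {(n : S)}).map (Ideal.Quotient.mk q) = Ideal.span {(n : S ⧸ q)} := by
    rw [Ideal.map_span, Set.image_singleton, map_natCast]
  rw [card_mul_eq_zero_eq_card_quotient, ← hmap,
    Nat.card_congr (DoubleQuot.quotQuotEquivQuotSup q _).toEquiv, ← Submodule.cardQuot_apply,
    ← Ideal.absNorm_apply, ← Ideal.absNorm_span_natCast]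
  refine Nat.le_of_dvd ?_ (Ideal.absNorm_dvd_absNorm_of_le le_sup_right)
  rw [Ideal.absNorm_span_natCast]
  positivity

theorem Units.card_mul_sq_eq_le {M : Type*} [CommMonoid M] [Finite M] {a : M} (ha : IsUnit a)
    (c : M) : Nat.card {ρ : Mˣ // a * (ρ : M) ^ 2 = c} ≤ Nat.card {x : M // x ^ 2 = 1} := by
  rcases isEmpty_or_nonempty {ρ : Mˣ // a * (ρ : M) ^ 2 = c} with _ | ⟨ρ₀, hρ₀⟩
  · simp
  refine Nat.card_le_card_of_injective (fun ρ => ⟨(ρ.1 * ρ₀⁻¹ : Mˣ), ?_⟩) fun ρ σ h => ?_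
  · have hsq : ρ.1 ^ 2 = ρ₀ ^ 2 := Units.ext (ha.mul_left_cancel (by push_cast; rw [ρ.2, hρ₀]))
    rw [← Units.val_pow_eq_pow_val, mul_pow, hsq, inv_pow, mul_inv_cancel, Units.val_one]
  · exact Subtype.ext (mul_right_cancel (Units.ext (Subtype.mk.inj h)))

theorem Ideal.Quotient.isUnit_mk_of_span_singleton_sup_eq_top {R : Type*} [CommRing R]
    {I : Ideal R} {x : R} (h : Ideal.span {x} ⊔ I = ⊤) : IsUnit (Ideal.Quotient.mk I x) := by
  rw [← Ideal.span_singleton_eq_top, ← Set.image_singleton, ← Ideal.map_span,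
    ← sup_bot_eq (Ideal.map _ _), ← Ideal.map_quotient_self I, ← Ideal.map_sup, h,
    Ideal.map_top]

theorem NumberField.card_mul_sq_eq_le {K : Type*} [Field K] [NumberField K] {q : Ideal (𝓞 K)}
    (hq : q ≠ ⊥) {α : 𝓞 K} (hα : Ideal.span {α} ⊔ q = ⊤) (c : 𝓞 K ⧸ q) :
    Nat.card {ρ : (𝓞 K ⧸ q)ˣ // Ideal.Quotient.mk q α * (ρ : 𝓞 K ⧸ q) ^ 2 = c} ≤
      2 ^ omegaI q * 2 ^ Module.finrank ℚ K := by
  have := Ideal.finiteQuotientOfFreeOfNeBot q hq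
  calc _ ≤ Nat.card {x : 𝓞 K ⧸ q // x ^ 2 = 1} :=
        Units.card_mul_sq_eq_le (Ideal.Quotient.isUnit_mk_of_span_singleton_sup_eq_top hα) c
    _ ≤ 2 ^ omegaI q * Nat.card {y : 𝓞 K ⧸ q // 2 * y = 0} := Ideal.card_sq_eq_one_le hq
    _ ≤ _ := by
        gcongr
        simpa [RingOfIntegers.rank] using Ideal.card_natCast_mul_eq_zero_le hq two_ne_zero

open Complex in
theorem Set.finite_and_ncard_le_of_normSq_sub_ge {α : Type*} (e : α → ℂ) {S : Set α}
    {m t r : ℝ} (hm : 0 < m) (hr : 0 ≤ r) (htr : 2 * t ≤ r ^ 2 * m)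
    (hsep : S.Pairwise fun z w => m ≤ normSq (e z - e w)) (hS : ∀ z ∈ S, normSq (e z) ≤ t) :
    S.Finite ∧ (S.ncard : ℝ) ≤ (2 * r + 2) ^ 2 := by
  set s := √(m / 2)
  have hs : 0 < s := Real.sqrt_pos.mpr (by positivity)
  have hs2 : s ^ 2 = m / 2 := Real.sq_sqrt (by positivity)
  let cell : ℂ → ℤ × ℤ := fun z => (⌊z.re / s⌋, ⌊z.im / s⌋)
  let box : Finset ℤ := Finset.Icc (-⌈r⌉) ⌊r⌋
  -- a square of side `s = √(m / 2)` has squared diameter `m`, so it holds at most one point of `S`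
  have hinj : S.InjOn (cell ∘ e) := by
    intro z hz w hw hzw
    by_contra hne
    have hre := Int.abs_sub_lt_one_of_floor_eq_floor (congrArg Prod.fst hzw)
    have him := Int.abs_sub_lt_one_of_floor_eq_floor (congrArg Prod.snd hzw)
    rw [← sub_div, abs_div, abs_of_pos hs, div_lt_one hs, abs_lt] at hre him
    have hfar : m ≤ normSq (e z - e w) := hsep hz hw hne
    rw [normSq_apply, sub_re, sub_im] at hfar
    nlinarith
  have hbox : ∀ x : ℝ, x ^ 2 ≤ t → ⌊x / s⌋ ∈ box := by
    intro x hx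
    have hxr : -r ≤ x / s ∧ x / s ≤ r := by
      rw [le_div_iff₀ hs, div_le_iff₀ hs, neg_mul]
      exact abs_le_of_sq_le_sq' (by nlinarith) (by positivity)
    rw [Finset.mem_Icc, ← Int.floor_neg]
    exact ⟨Int.floor_mono hxr.1, Int.floor_mono hxr.2⟩
  have hmaps : Set.MapsTo (cell ∘ e) S (box ×ˢ box : Finset (ℤ × ℤ)) := by
    intro z hz
    have hzt := hS z hz
    rw [normSq_apply] at hzt
    simp only [Function.comp, Finset.coe_product, Set.mem_prod, Finset.mem_coe, cell]
    exact ⟨hbox _ (by nlinarith), hbox _ (by nlinarith)⟩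
  have hcard : ((box ×ˢ box).card : ℝ) ≤ (2 * r + 2) ^ 2 := by
    have hbox_card : (box.card : ℝ) ≤ 2 * r + 2 := by
      rw [Int.card_Icc, ← Int.cast_natCast, Int.toNat_of_nonneg (by
        have := Int.floor_nonneg.mpr hr; have := Int.ceil_nonneg hr; omega)]
      push_cast
      linarith [Int.floor_le r, Int.ceil_lt_add_one r]
    rw [Finset.card_product, Nat.cast_mul, ← sq]
    gcongr
  refine ⟨Set.Finite.of_injOn hmaps hinj (Finset.finite_toSet _), ?_⟩
  calc (S.ncard : ℝ) ≤ (box ×ˢ box).card := by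
        exact_mod_cast (Set.ncard_le_ncard_of_injOn _ hmaps hinj (Finset.finite_toSet _)).trans
          (Set.ncard_coe_finset _).le
    _ ≤ _ := hcard

theorem NumberField.normSq_eq_abs_norm {K : Type*} [Field K] [NumberField K] (ι : K →+* ℂ)
    (hdeg : Module.finrank ℚ K = 2) (himag : ∀ v : InfinitePlace K, v.IsComplex) (x : K) :
    Complex.normSq (ι x) = |(Algebra.norm ℚ x : ℝ)| := by
  have : IsTotallyComplex K := ⟨himag⟩
  have hcard : Fintype.card (InfinitePlace K) = 1 := by
    have := InfinitePlace.card_add_two_mul_card_eq_rank K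
    rw [IsTotallyComplex.nrRealPlaces_eq_zero, hdeg] at this
    rw [InfinitePlace.card_eq_nrRealPlaces_add_nrComplexPlaces,
      IsTotallyComplex.nrRealPlaces_eq_zero]
    omega
  have : Subsingleton (InfinitePlace K) := Fintype.card_le_one_iff_subsingleton.mp hcard.le
  have hprod := InfinitePlace.prod_eq_abs_norm x
  rw [Fintype.prod_subsingleton _ (InfinitePlace.mk ι), IsTotallyComplex.mult_eq,
    InfinitePlace.apply] at hprod
  rw [Complex.normSq_eq_norm_sq, hprod, Rat.cast_abs]

theorem NumberField.absNorm_le_normSq {K : Type*} [Field K] [NumberField K] (ι : K →+* ℂ)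
    (hdeg : Module.finrank ℚ K = 2) (himag : ∀ v : InfinitePlace K, v.IsComplex)
    {a : Ideal (𝓞 K)} {z : 𝓞 K} (hz : z ∈ a) (hz0 : z ≠ 0) :
    (Ideal.absNorm a : ℝ) ≤ Complex.normSq (ι (algebraMap (𝓞 K) K z)) := by
  rw [normSq_eq_abs_norm ι hdeg himag, ← Algebra.coe_norm_int, Rat.cast_intCast]
  have hpos : 0 < |Algebra.norm ℤ z| := abs_pos.mpr (Algebra.norm_ne_zero_iff.mpr hz0)
  exact_mod_cast Int.le_of_dvd hpos ((dvd_abs _ _).mpr (Ideal.absNorm_dvd_norm_of_mem hz))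

theorem NumberField.finite_and_ncard_le_of_normSq_le {K : Type*} [Field K] [NumberField K]
    (ι : K →+* ℂ) (hdeg : Module.finrank ℚ K = 2)
    (himag : ∀ v : InfinitePlace K, v.IsComplex) {a : Ideal (𝓞 K)} (ha : a ≠ ⊥)
    {S : Set (𝓞 K)} (hSa : S ⊆ a) {t Y : ℝ}
    (hS : ∀ z ∈ S, Complex.normSq (ι (algebraMap (𝓞 K) K z)) ≤ t) (hY : 1 ≤ Y)
    (ht : t ≤ 4 * Y * Ideal.absNorm a) :
    S.Finite ∧ (S.ncard : ℝ) ≤ 64 * Y := by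
  have hNa : (0 : ℝ) < Ideal.absNorm a := by
    exact_mod_cast Nat.pos_of_ne_zero (mt Ideal.absNorm_eq_zero_iff.mp ha)
  set r := √(8 * Y)
  have hr2 : r ^ 2 = 8 * Y := Real.sq_sqrt (by positivity)
  have hsep : S.Pairwise fun z w => Ideal.absNorm a ≤
      Complex.normSq (ι (algebraMap (𝓞 K) K z) - ι (algebraMap (𝓞 K) K w)) := by
    intro z hz w hw hzw
    rw [← map_sub, ← map_sub]
    exact absNorm_le_normSq ι hdeg himag (a.sub_mem (hSa hz) (hSa hw)) (sub_ne_zero.mpr hzw)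
  obtain ⟨hfin, hcard⟩ := Set.finite_and_ncard_le_of_normSq_sub_ge _ hNa (Real.sqrt_nonneg _)
    (by rw [hr2]; nlinarith) hsep hS
  exact ⟨hfin, hcard.trans (by nlinarith [sq_nonneg (r - 4), Real.sqrt_nonneg (8 * Y)])⟩

theorem finsum_card_fiber_le {ι α β : Type*} [Finite ι] {Z : Set α} (hZ : Z.Finite)
    (f : α → β) (g : ι → β) {n : ℕ} (hn : ∀ b, Nat.card {i // g i = b} ≤ n) :
    ∑ᶠ i, Nat.card {z // z ∈ Z ∧ f z = g i} ≤ Z.ncard * n := by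
  have := Fintype.ofFinite ι
  lift Z to Finset α using hZ
  rw [finsum_eq_sum_of_fintype, Set.ncard_coe_finset]
  calc ∑ i, Nat.card {z // z ∈ (Z : Set α) ∧ f z = g i}
      = ∑ i, (Z.bipartiteBelow (fun z i => f z = g i) i).card := by
        refine Finset.sum_congr rfl fun i _ => ?_
        rw [← Nat.card_eq_finsetCard]
        exact Nat.card_congr (Equiv.subtypeEquivRight fun z => by simp [Finset.bipartiteBelow])
    _ = ∑ z ∈ Z, (Finset.univ.bipartiteAbove (fun z i => f z = g i) z).card :=
        (Finset.sum_card_bipartiteAbove_eq_sum_card_bipartiteBelow _).symm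
    _ ≤ Z.card * n := by
        refine Finset.sum_le_card_nsmul _ _ _ fun z _ => ?_
        rw [← Nat.card_eq_finsetCard]
        refine (Nat.card_congr (Equiv.subtypeEquivRight fun i => ?_)).trans_le (hn (f z))
        simp [Finset.bipartiteAbove, eq_comm]

/-- small-`t` case of Theorem 1.2: if `t < 4 √(N q) N a` then
`∑_{ρ mod q, (ρ,q)=1} #{z ∈ a : z ≡ αρ² mod q, |z|² ≤ t} = O(2^{ω(q)} √(N q))`. -/
theorem stmt_5 {K : Type*} [Field K] [NumberField K] (ι : K →+* ℂ)
    (hdeg : Module.finrank ℚ K = 2)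
    (himag : ∀ v : NumberField.InfinitePlace K, v.IsComplex) :
    ∃ C : ℝ, 0 < C ∧ ∀ (a q : Ideal (𝓞 K)), a ≠ 0 → q ≠ 0 → ∀ α : 𝓞 K,
      a ⊔ q = ⊤ → Ideal.span {α} ⊔ q = ⊤ → ∀ t : ℝ,
      t < 4 * Real.sqrt (Ideal.absNorm q : ℝ) * (Ideal.absNorm a : ℝ) →
      (∑ᶠ ρ : (𝓞 K ⧸ q)ˣ,
          (Nat.card {z : 𝓞 K // z ∈ a ∧
              Ideal.Quotient.mk q z = Ideal.Quotient.mk q α * (ρ : 𝓞 K ⧸ q) ^ 2 ∧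
              Complex.normSq (ι (algebraMap (𝓞 K) K z)) ≤ t} : ℝ))
        ≤ C * 2 ^ omegaI q * Real.sqrt (Ideal.absNorm q : ℝ) := by
  refine ⟨64 * 4, by norm_num, fun a q ha hq α _ hα t ht => ?_⟩
  have := Ideal.finiteQuotientOfFreeOfNeBot q hq
  set π := Ideal.Quotient.mk q
  set Z := {z : 𝓞 K | z ∈ a ∧ Complex.normSq (ι (algebraMap (𝓞 K) K z)) ≤ t}
  have hNq : 1 ≤ √(Ideal.absNorm q : ℝ) := Real.one_le_sqrt.mpr
    (by exact_mod_cast Nat.one_le_iff_ne_zero.mpr (mt Ideal.absNorm_eq_zero_iff.mp hq))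
  obtain ⟨hZ, hZcard⟩ := finite_and_ncard_le_of_normSq_le (S := Z) ι hdeg himag ha
    (fun _ hz => hz.1) (fun _ hz => hz.2) hNq ht.le
  have hsum := finsum_card_fiber_le hZ π (fun ρ : (𝓞 K ⧸ q)ˣ => π α * (ρ : 𝓞 K ⧸ q) ^ 2)
    (card_mul_sq_eq_le hq hα)
  rw [hdeg] at hsum
  calc _ = ((∑ᶠ ρ : (𝓞 K ⧸ q)ˣ, Nat.card {z // z ∈ Z ∧ π z = π α * (ρ : 𝓞 K ⧸ q) ^ 2} : ℕ)
        : ℝ) := by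
        rw [Nat.cast_finsum]
        exact finsum_congr fun ρ => congrArg _ (Nat.card_congr (Equiv.subtypeEquivRight
          fun _ => ⟨fun h => ⟨⟨h.1, h.2.2⟩, h.2.1⟩, fun h => ⟨h.1.1, h.2, h.1.2⟩⟩))
    _ ≤ Z.ncard * (2 ^ omegaI q * 2 ^ 2) := by exact_mod_cast hsum
    _ ≤ 64 * √(Ideal.absNorm q : ℝ) * (2 ^ omegaI q * 2 ^ 2) := by gcongr
    _ = _ := by ring
end

section
/- Let B ≥ 3. The integral J(B) := ∫ dη₁dη₃dη₄dη₅dη₆dη₇ / |η₁η₃η₄η₅η₆η₇| over all (η₁,η₃,η₄,η₅,η₆,η₇) ∈ ℂ⁶ with |η₁|,|η₃|,|η₄|,|η₅|,|η₆|,|η₇| ≥ 1 and |η₁²η₃⁴η₄⁴η₅⁵η₆⁶η₇³| ≤ B satisfies J(B) = 3π⁶·α·(log B)⁶ with α = 1/6220800, where |z| = z·conj(z) and the integration is with respect to Lebesgue measure on ℂ ≅ ℝ² in each variable. -/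
open MeasureTheory
open scoped Real Classical

open Set
open scoped ENNReal NNReal

/-!
Write `|η|` for `Complex.normSq η`. In polar coordinates `∫ f(|η|) dη = π ∫₀^∞ f(x) dx`, so under
the logarithmic variable `t = log |η|` the measure `dη / |η|` on `{|η| ≥ 1}` becomes `π dt` on
`{t ≥ 0}`. Taking products over the six coordinates, the integral is `π⁶` times the volume of the
simplex `{t ≥ 0, 2t₁ + 4t₂ + 4t₃ + 5t₄ + 6t₅ + 3t₆ ≤ log B}`, and slicing off one coordinate at a
time shows that `{t ≥ 0, ∑ eᵢ tᵢ ≤ L}` has volume `Lⁿ / (n! ∏ eᵢ)`.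
-/

namespace MeasureTheory

theorem lintegral_fin_nat_prod_eq_prod {n : ℕ} {E : Type*} [MeasurableSpace E]
    {μ : Fin n → Measure E} [∀ i, SigmaFinite (μ i)] {f : Fin n → E → ℝ≥0∞}
    (hf : ∀ i, Measurable (f i)) :
    ∫⁻ x, ∏ i, f i (x i) ∂Measure.pi μ = ∏ i, ∫⁻ x, f i x ∂μ i := by
  induction n with
  | zero => simp
  | succ n ih =>
      calc
        _ = ∫⁻ x : E × (Fin n → E),
            f 0 x.1 * ∏ i : Fin n, f (Fin.succ i) (x.2 i)
            ∂(μ 0).prod (Measure.pi fun i => μ i.succ) := by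
          rw [← ((measurePreserving_piFinSuccAbove μ 0).symm).lintegral_comp_emb
            (MeasurableEquiv.measurableEmbedding _)]
          simp_rw [MeasurableEquiv.piFinSuccAbove_symm_apply, Fin.insertNthEquiv,
            Equiv.coe_fn_mk, Fin.insertNth_zero', Fin.prod_univ_succ, Fin.cons_zero, Fin.cons_succ,
            Fin.zero_succAbove]
        _ = (∫⁻ x, f 0 x ∂μ 0) * ∏ i : Fin n, ∫⁻ x, f i.succ x ∂μ i.succ := by
          rw [← ih fun i => hf i.succ]
          exact lintegral_prod_mul (μ := μ 0) (ν := Measure.pi fun i : Fin n => μ i.succ)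
            (f := f 0) (g := fun y : Fin n → E => ∏ i, f i.succ (y i)) (hf 0).aemeasurable
            (Finset.measurable_prod _ fun i _ =>
              (hf i.succ).comp (measurable_pi_apply i)).aemeasurable
        _ = ∏ i, ∫⁻ x, f i x ∂μ i := (Fin.prod_univ_succ fun i => ∫⁻ x, f i x ∂μ i).symm

theorem Measure.pi_withDensity {n : ℕ} {E : Type*} [MeasurableSpace E]
    {μ : Fin n → Measure E} [∀ i, SigmaFinite (μ i)] {f : Fin n → E → ℝ≥0∞}
    [∀ i, SigmaFinite ((μ i).withDensity (f i))] (hf : ∀ i, Measurable (f i)) :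
    Measure.pi (fun i => (μ i).withDensity (f i))
      = (Measure.pi μ).withDensity fun x => ∏ i, f i (x i) := by
  refine Measure.pi_eq fun s hs => ?_
  rw [withDensity_apply _ (MeasurableSet.univ_pi hs), Measure.restrict_pi_pi,
    lintegral_fin_nat_prod_eq_prod hf]
  exact Finset.prod_congr rfl fun i _ => (withDensity_apply _ (hs i)).symm

theorem Measure.pi_smul {ι : Type*} [Fintype ι] {E : ι → Type*} [∀ i, MeasurableSpace (E i)]
    (μ : (i : ι) → Measure (E i)) [∀ i, SigmaFinite (μ i)] (c : ℝ≥0) :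
    Measure.pi (fun i => c • μ i) = c ^ Fintype.card ι • Measure.pi μ := by
  refine Measure.pi_eq fun s _ => ?_
  simp only [Measure.smul_apply, Measure.pi_pi, ENNReal.smul_def, smul_eq_mul,
    Finset.prod_mul_distrib, Finset.prod_const, Finset.card_univ, ENNReal.coe_pow]

end MeasureTheory

theorem lintegral_comp_normSq (h : ℝ → ℝ≥0∞) (hh : Measurable h) :
    ∫⁻ z : ℂ, h (Complex.normSq z) = NNReal.pi * ∫⁻ x in Ioi 0, h x := by
  have hsq : (fun r : ℝ => r ^ 2) '' Ioi 0 = Ioi 0 := by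
    ext x
    refine ⟨?_, fun hx => ⟨√x, Real.sqrt_pos.2 hx, Real.sq_sqrt (le_of_lt hx)⟩⟩
    rintro ⟨r, hr, rfl⟩
    exact pow_pos (mem_Ioi.1 hr) 2
  have hsubst := lintegral_image_eq_lintegral_abs_deriv_mul measurableSet_Ioi
    (fun r _ => (hasDerivAt_pow 2 r).hasDerivWithinAt)
    ((pow_left_strictMonoOn₀ two_ne_zero).injOn.mono (Ioi_subset_Ici le_rfl)) h
  rw [hsq] at hsubst
  have hhalf : ∫⁻ x in Ioi 0, h x = 2 * ∫⁻ r in Ioi 0, ENNReal.ofReal r * h (r ^ 2) := by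
    rw [hsubst, ← lintegral_const_mul' _ _ ENNReal.ofNat_ne_top]
    refine setLIntegral_congr_fun measurableSet_Ioi fun r hr => ?_
    rw [← mul_assoc, ← ENNReal.ofReal_ofNat 2, ← ENNReal.ofReal_mul zero_le_two]
    simp [abs_of_pos (mem_Ioi.1 hr)]
  rw [← Complex.lintegral_comp_polarCoord_symm, polarCoord_target, Measure.volume_eq_prod,
    ← Measure.prod_restrict]
  simp_rw [Complex.normSq_eq_norm_sq, Complex.norm_polarCoord_symm, sq_abs, smul_eq_mul]
  calc _ = (∫⁻ r in Ioi 0, ENNReal.ofReal r * h (r ^ 2)) * ∫⁻ _ in Ioo (-π) π, 1 := by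
        simpa only [mul_one] using lintegral_prod_mul (μ := volume.restrict (Ioi 0))
          (ν := volume.restrict (Ioo (-π) π)) (f := fun r => ENNReal.ofReal r * h (r ^ 2))
          (g := fun _ => 1) (by fun_prop) aemeasurable_const
    _ = NNReal.pi * ∫⁻ x in Ioi 0, h x := by
        rw [hhalf, setLIntegral_one, Real.volume_Ioo, sub_neg_eq_add, ← two_mul,
          ENNReal.ofReal_mul zero_le_two, ENNReal.ofReal_ofNat, ← NNReal.coe_real_pi,
          ENNReal.ofReal_coe_nnreal]
        ring

theorem setLIntegral_image_exp_inv {s : Set ℝ} (hs : MeasurableSet s) :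
    ∫⁻ x in Real.exp '' s, (ENNReal.ofReal x)⁻¹ = volume s := by
  rw [lintegral_image_eq_lintegral_abs_deriv_mul hs
    (fun t _ => (Real.hasDerivAt_exp t).hasDerivWithinAt) Real.exp_injective.injOn]
  refine (setLIntegral_congr_fun hs fun t _ => ?_).trans (setLIntegral_one s)
  rw [abs_of_pos (Real.exp_pos t), ENNReal.mul_inv_cancel (by simp [Real.exp_pos]) (by simp)]

noncomputable def invNormSqOffUnitDisk (z : ℂ) : ℝ≥0∞ :=
  (Ici 1).indicator (fun x => (ENNReal.ofReal x)⁻¹) (Complex.normSq z)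

theorem measurable_invNormSqOffUnitDisk : Measurable invNormSqOffUnitDisk :=
  (ENNReal.measurable_ofReal.inv.indicator measurableSet_Ici).comp
    Complex.continuous_normSq.measurable

instance : SigmaFinite (volume.withDensity invNormSqOffUnitDisk) :=
  SigmaFinite.withDensity_of_ne_top' fun z => by
    rw [invNormSqOffUnitDisk, indicator_apply]
    split_ifs with hz
    · exact ENNReal.inv_ne_top.2 (ENNReal.ofReal_pos.2 (one_pos.trans_le hz)).ne'
    · exact ENNReal.zero_ne_top

theorem prod_invNormSqOffUnitDisk {ι : Type*} [Fintype ι] (η : ι → ℂ) :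
    ∏ i, invNormSqOffUnitDisk (η i) = {η : ι → ℂ | ∀ i, 1 ≤ Complex.normSq (η i)}.indicator
      (fun η => ENNReal.ofReal (∏ i, Complex.normSq (η i))⁻¹) η := by
  by_cases h : ∀ i, 1 ≤ Complex.normSq (η i)
  · have hpos i : 0 < Complex.normSq (η i) := one_pos.trans_le (h i)
    rw [indicator_of_mem (show η ∈ {η : ι → ℂ | ∀ i, 1 ≤ Complex.normSq (η i)} from h),
      ← Finset.prod_inv_distrib,
      ENNReal.ofReal_prod_of_nonneg fun i _ => inv_nonneg.2 (hpos i).le]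
    refine Finset.prod_congr rfl fun i _ => ?_
    rw [invNormSqOffUnitDisk, indicator_of_mem (show Complex.normSq (η i) ∈ Ici 1 from h i),
      ENNReal.ofReal_inv_of_pos (hpos i)]
  · obtain ⟨i, hi⟩ := not_forall.1 h
    rw [indicator_of_notMem (show η ∉ {η : ι → ℂ | ∀ i, 1 ≤ Complex.normSq (η i)} from h)]
    exact Finset.prod_eq_zero (Finset.mem_univ i) (indicator_of_notMem hi _)

theorem map_log_normSq_withDensity_invNormSqOffUnitDisk :
    (volume.withDensity invNormSqOffUnitDisk).map (fun z => Real.log (Complex.normSq z))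
      = NNReal.pi • volume.restrict (Ici 0) := by
  have hm : Measurable fun z => Real.log (Complex.normSq z) :=
    Real.measurable_log.comp Complex.continuous_normSq.measurable
  ext s hs
  have hset : Real.log ⁻¹' s ∩ Ici 1 ∩ Ioi 0 = Real.exp '' (s ∩ Ici 0) := by
    ext x
    constructor
    · rintro ⟨⟨hxs, hx1⟩, hx0⟩
      exact ⟨Real.log x, ⟨hxs, Real.log_nonneg hx1⟩, Real.exp_log hx0⟩
    · rintro ⟨t, ⟨hts, ht0⟩, rfl⟩
      exact ⟨⟨by simpa using hts, Real.one_le_exp_iff.2 ht0⟩, Real.exp_pos t⟩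
  rw [Measure.map_apply hm hs, withDensity_apply _ (hm hs), ← lintegral_indicator (hm hs),
    Measure.smul_apply, Measure.restrict_apply hs, ENNReal.smul_def, smul_eq_mul]
  change ∫⁻ z, (Real.log ⁻¹' s).indicator ((Ici 1).indicator fun x => (ENNReal.ofReal x)⁻¹)
    (Complex.normSq z) = _
  have hψ : Measurable ((Ici (1:ℝ)).indicator fun x => (ENNReal.ofReal x)⁻¹) :=
    (Measurable.inv (by fun_prop)).indicator measurableSet_Ici
  rw [lintegral_comp_normSq _ (hψ.indicator (Real.measurable_log hs)), indicator_indicator,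
    lintegral_indicator ((Real.measurable_log hs).inter measurableSet_Ici),
    Measure.restrict_restrict ((Real.measurable_log hs).inter measurableSet_Ici), hset,
    setLIntegral_image_exp_inv (hs.inter measurableSet_Ici)]

theorem setLIntegral_Icc_ofReal_sub_mul_pow {a L : ℝ} (ha : 0 < a) (hL : 0 ≤ L) (n : ℕ) :
    ∫⁻ s in Icc 0 (L / a), ENNReal.ofReal ((L - a * s) ^ n)
      = ENNReal.ofReal (L ^ (n + 1) / (a * (n + 1))) := by
  have hnonneg : ∀ s ∈ Icc 0 (L / a), 0 ≤ L - a * s := fun s hs =>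
    sub_nonneg.2 ((le_div_iff₀' ha).1 hs.2)
  rw [← ofReal_integral_eq_lintegral_ofReal
      (by fun_prop : Continuous fun s => (L - a * s) ^ n).integrableOn_Icc
      ((ae_restrict_iff' measurableSet_Icc).2 <|
        ae_of_all _ fun s hs => pow_nonneg (hnonneg s hs) n),
    integral_Icc_eq_integral_Ioc, ← intervalIntegral.integral_of_le (div_nonneg hL ha.le),
    intervalIntegral.integral_comp_sub_mul (fun x => x ^ n) ha.ne', integral_pow,
    mul_div_cancel₀ L ha.ne', sub_self, mul_zero, sub_zero, smul_eq_mul]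
  congr 1
  rw [zero_pow n.succ_ne_zero, sub_zero]
  field_simp

def weightedSimplex {n : ℕ} (e : Fin n → ℝ) (L : ℝ) : Set (Fin n → ℝ) :=
  {t | (∀ i, 0 ≤ t i) ∧ ∑ i, e i * t i ≤ L}

theorem measurableSet_weightedSimplex {n : ℕ} (e : Fin n → ℝ) (L : ℝ) :
    MeasurableSet (weightedSimplex e L) := by
  simp only [weightedSimplex, ofPred_and, ofPred_forall]
  exact (MeasurableSet.iInter fun i =>
    measurableSet_le measurable_const (measurable_pi_apply i)).inter
      (measurableSet_le (by fun_prop) measurable_const)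

theorem nonneg_of_mem_weightedSimplex {n : ℕ} {e : Fin n → ℝ} (he : ∀ i, 0 ≤ e i) {L : ℝ}
    {t : Fin n → ℝ} (ht : t ∈ weightedSimplex e L) : 0 ≤ L :=
  (Finset.sum_nonneg fun i _ => mul_nonneg (he i) (ht.1 i)).trans ht.2

theorem cons_mem_weightedSimplex {n : ℕ} {e : Fin (n + 1) → ℝ} {L s : ℝ} {t : Fin n → ℝ} :
    Fin.cons s t ∈ weightedSimplex e L
      ↔ 0 ≤ s ∧ t ∈ weightedSimplex (fun i => e i.succ) (L - e 0 * s) := by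
  simp only [weightedSimplex, mem_ofPred_eq, Fin.forall_fin_succ, Fin.sum_univ_succ,
    Fin.cons_zero, Fin.cons_succ]
  constructor
  · rintro ⟨⟨hs, ht⟩, hsum⟩
    exact ⟨hs, ht, by linarith⟩
  · rintro ⟨hs, ht, hsum⟩
    exact ⟨⟨hs, ht⟩, by linarith⟩

theorem cons_preimage_weightedSimplex {n : ℕ} {e : Fin (n + 1) → ℝ} (he : ∀ i, 0 < e i)
    (L s : ℝ) :
    (fun t : Fin n → ℝ => (Fin.cons s t : Fin (n + 1) → ℝ)) ⁻¹' weightedSimplex e L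
      = if s ∈ Icc 0 (L / e 0) then weightedSimplex (fun i => e i.succ) (L - e 0 * s) else ∅ := by
  ext t
  rw [mem_preimage, cons_mem_weightedSimplex]
  split_ifs with hs
  · exact and_iff_right hs.1
  · refine iff_of_false (fun ⟨h0, ht⟩ => hs ⟨h0, (le_div_iff₀' (he 0)).2 ?_⟩) (notMem_empty t)
    linarith [nonneg_of_mem_weightedSimplex (fun i => (he i.succ).le) ht]

theorem volume_weightedSimplex {n : ℕ} (e : Fin n → ℝ) (he : ∀ i, 0 < e i) {L : ℝ} (hL : 0 ≤ L) :
    volume (weightedSimplex e L) = ENNReal.ofReal (L ^ n / (n.factorial * ∏ i, e i)) := by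
  induction n generalizing L with
  | zero => simp [weightedSimplex, hL, volume_pi]
  | succ n ih =>
    set a := e 0
    set C := (n.factorial : ℝ) * ∏ i : Fin n, e i.succ
    have ha : 0 < a := he 0
    have hslice (s : ℝ) :
        volume ((fun t : Fin n → ℝ => (Fin.cons s t : Fin (n + 1) → ℝ)) ⁻¹' weightedSimplex e L)
          = (Icc 0 (L / a)).indicator
              (fun s => ENNReal.ofReal ((L - a * s) ^ n) * ENNReal.ofReal C⁻¹) s := by
      rw [cons_preimage_weightedSimplex he, indicator_apply]
      split_ifs with hs
      · have hLs : 0 ≤ L - a * s := sub_nonneg.2 ((le_div_iff₀' ha).1 hs.2)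
        rw [ih _ (fun i => he _) hLs, div_eq_mul_inv, ENNReal.ofReal_mul (pow_nonneg hLs n)]
      · exact measure_empty
    have hmp := (volume_preserving_piFinSuccAbove (fun _ : Fin (n + 1) => ℝ) 0).symm
    rw [← hmp.measure_preimage (measurableSet_weightedSimplex e L).nullMeasurableSet,
      Measure.volume_eq_prod,
      Measure.prod_apply (hmp.measurable (measurableSet_weightedSimplex e L))]
    simp_rw [preimage_preimage, MeasurableEquiv.piFinSuccAbove_symm_apply, Fin.insertNthEquiv,
      Equiv.coe_fn_mk, Fin.insertNth_zero', hslice]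
    rw [lintegral_indicator measurableSet_Icc, lintegral_mul_const _ (by fun_prop),
      setLIntegral_Icc_ofReal_sub_mul_pow ha hL, ← ENNReal.ofReal_mul (by positivity),
      Fin.prod_univ_succ, Nat.factorial_succ]
    congr 1
    simp only [C, a]
    push_cast
    field_simp

theorem setLIntegral_inv_prod_normSq {n : ℕ} (e : Fin n → ℝ) (he : ∀ i, 0 < e i) {L : ℝ}
    (hL : 0 ≤ L) :
    ∫⁻ η in {η : Fin n → ℂ | (∀ i, 1 ≤ Complex.normSq (η i)) ∧
        ∑ i, e i * Real.log (Complex.normSq (η i)) ≤ L},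
      ENNReal.ofReal (∏ i, Complex.normSq (η i))⁻¹
      = NNReal.pi ^ n * ENNReal.ofReal (L ^ n / (n.factorial * ∏ i, e i)) := by
  set ℓ : (Fin n → ℂ) → Fin n → ℝ := fun η i => Real.log (Complex.normSq (η i))
  set T : Set (Fin n → ℝ) := {t | ∑ i, e i * t i ≤ L}
  have hℓ : Measurable ℓ := measurable_pi_lambda _ fun i =>
    Real.measurable_log.comp (Complex.continuous_normSq.measurable.comp (measurable_pi_apply i))
  have hT : MeasurableSet T := measurableSet_le (by fun_prop) measurable_const
  calc _ = ∫⁻ η in ℓ ⁻¹' T, ∏ i, invNormSqOffUnitDisk (η i) := by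
        have hA : MeasurableSet {η : Fin n → ℂ | ∀ i, 1 ≤ Complex.normSq (η i)} := by
          simp only [ofPred_forall]
          exact MeasurableSet.iInter fun i => measurableSet_le measurable_const (by fun_prop)
        rw [← lintegral_indicator (hℓ hT), funext prod_invNormSqOffUnitDisk, indicator_indicator,
          lintegral_indicator ((hℓ hT).inter hA)]
        congr 2
        ext η
        simp [ℓ, T, and_comm]
    _ = Measure.pi (fun _ => volume.withDensity invNormSqOffUnitDisk) (ℓ ⁻¹' T) := by
        rw [Measure.pi_withDensity fun _ => measurable_invNormSqOffUnitDisk,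
          withDensity_apply _ (hℓ hT), volume_pi]
    _ = Measure.pi (fun _ => NNReal.pi • volume.restrict (Ici (0 : ℝ))) T := by
        have hmap := map_log_normSq_withDensity_invNormSqOffUnitDisk
        have : SigmaFinite ((volume.withDensity invNormSqOffUnitDisk).map
            fun z => Real.log (Complex.normSq z)) := hmap ▸ inferInstance
        rw [← Measure.map_apply hℓ hT, ← hmap]
        exact congrArg (· T) <| Measure.pi_map_pi
          (μ := fun _ => volume.withDensity invNormSqOffUnitDisk)
          (f := fun _ z => Real.log (Complex.normSq z)) fun _ =>
            (Real.measurable_log.comp Complex.continuous_normSq.measurable).aemeasurable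
    _ = NNReal.pi ^ n * volume (weightedSimplex e L) := by
        rw [Measure.pi_smul, ← Measure.restrict_pi_pi, Measure.smul_apply,
          Measure.restrict_apply hT, ← volume_pi, Fintype.card_fin, ENNReal.smul_def, smul_eq_mul,
          ENNReal.coe_pow]
        congr 2
        ext t
        simp [T, weightedSimplex, and_comm, Pi.le_def]
    _ = _ := by rw [volume_weightedSimplex e he hL]

theorem setIntegral_inv_prod_normSq {n : ℕ} (e : Fin n → ℝ) (he : ∀ i, 0 < e i) {L : ℝ}
    (hL : 0 ≤ L) :
    ∫ η in {η : Fin n → ℂ | (∀ i, 1 ≤ Complex.normSq (η i)) ∧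
        ∑ i, e i * Real.log (Complex.normSq (η i)) ≤ L},
      (∏ i, Complex.normSq (η i))⁻¹
      = π ^ n * (L ^ n / (n.factorial * ∏ i, e i)) := by
  have hP : 0 < ∏ i, e i := Finset.prod_pos fun i _ => he i
  rw [integral_eq_lintegral_of_nonneg_ae (ae_of_all _ fun η => inv_nonneg.2 <|
      Finset.prod_nonneg fun i _ => Complex.normSq_nonneg _)
      (continuous_finsetProd _ fun i _ =>
        Complex.continuous_normSq.comp (continuous_apply i)).measurable.inv.aestronglyMeasurable,
    setLIntegral_inv_prod_normSq e he hL, ENNReal.toReal_mul, ENNReal.toReal_pow,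
    ENNReal.coe_toReal, NNReal.coe_real_pi, ENNReal.toReal_ofReal (by positivity)]

/-- eq. 6.2: the α-constant integral
`∫_{|η_j| ≥ 1, |η₁²η₃⁴η₄⁴η₅⁵η₆⁶η₇³| ≤ B} dη/|η₁η₃η₄η₅η₆η₇| = 3π⁶·(1/6220800)·(log B)⁶`,
where `|z| = z·conj z` and `η 0, …, η 5` stand for `η₁, η₃, η₄, η₅, η₆, η₇`. -/
theorem stmt_16 (B : ℝ) (hB : 3 ≤ B) :
    (∫ η in {η : Fin 6 → ℂ | (∀ i, 1 ≤ Complex.normSq (η i)) ∧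
        Complex.normSq (η 0 ^ 2 * η 1 ^ 4 * η 2 ^ 4 * η 3 ^ 5 * η 4 ^ 6 * η 5 ^ 3) ≤ B},
        1 / Complex.normSq (η 0 * η 1 * η 2 * η 3 * η 4 * η 5))
      = 3 * π ^ 6 * (1 / 6220800) * Real.log B ^ 6 := by
  set k : Fin 6 → ℕ := ![2, 4, 4, 5, 6, 3]
  have hB0 : 0 < B := by linarith
  have hdomain : {η : Fin 6 → ℂ | (∀ i, 1 ≤ Complex.normSq (η i)) ∧
        Complex.normSq (η 0 ^ 2 * η 1 ^ 4 * η 2 ^ 4 * η 3 ^ 5 * η 4 ^ 6 * η 5 ^ 3) ≤ B}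
      = {η | (∀ i, 1 ≤ Complex.normSq (η i)) ∧
        ∑ i, (k i : ℝ) * Real.log (Complex.normSq (η i)) ≤ Real.log B} := by
    ext η
    refine and_congr_right fun h => ?_
    have hpos i : 0 < Complex.normSq (η i) ^ k i := pow_pos (one_pos.trans_le (h i)) _
    have hmonomial : Complex.normSq (η 0 ^ 2 * η 1 ^ 4 * η 2 ^ 4 * η 3 ^ 5 * η 4 ^ 6 * η 5 ^ 3)
        = ∏ i, Complex.normSq (η i) ^ k i := by
      simp [k, Fin.prod_univ_six]
    rw [hmonomial, ← Real.log_le_log_iff (Finset.prod_pos fun i _ => hpos i) hB0,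
      Real.log_prod fun i _ => (hpos i).ne']
    simp only [Real.log_pow]
  have hintegrand (η : Fin 6 → ℂ) :
      1 / Complex.normSq (η 0 * η 1 * η 2 * η 3 * η 4 * η 5) = (∏ i, Complex.normSq (η i))⁻¹ := by
    simp [Fin.prod_univ_six]
  simp_rw [hdomain, hintegrand]
  rw [setIntegral_inv_prod_normSq (fun i => (k i : ℝ)) (fun i => by fin_cases i <;> simp [k])
    (Real.log_nonneg (by linarith))]
  simp [k, Fin.prod_univ_six, Nat.factorial]
  ring
end

section
/- Let B > 0 and consider complex variables η₂, η₈, η₉ with the constraints |η₁²η₂³η₃⁴η₄⁴η₅⁵η₆⁶η₇³| ≤ B, |η₁²η₂²η₃³η₄²η₅³η₆⁴η₇η₈| ≤ B, |η₁η₂²η₃²η₄η₅²η₆³η₉| ≤ B, |(η₁²η₃η₈³+η₂η₉²)/(η₄²η₅η₇³)| ≤ B, for fixed nonzero η₁,η₃,η₄,η₅,η₆,η₇ ∈ ℂ, where |z| = z·conj(z). Then (12/π)·(|η₁η₃η₄η₅η₆η₇|/B)·∫_{constraints} (1/|η₄²η₅η₇³|) dη₂ dη₈ dη₉ = ω_∞,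 where ω_∞ = (12/π)∫_{|z₀z₁²|,|z₀²z₁+z₂³|,|z₁³|,|z₁²z₂| ≤ 1} dz₀dz₁dz₂. -/
open MeasureTheory
open scoped Real Classical

set_option maxHeartbeats 1000000

lemma vol_preimage_cmul (c : ℂ) (hc : c ≠ 0) (s : Set ℂ) :
    volume ((fun z : ℂ => c * z) ⁻¹' s) = ENNReal.ofReal (Complex.normSq c)⁻¹ * volume s := by
  have hdet : LinearMap.det ((LinearMap.mul ℝ ℂ) c) = Complex.normSq c := by
    rw [← Algebra.norm_complex_apply]; rfl
  have := MeasureTheory.Measure.addHaar_preimage_linearMap (μ := volume)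
    (f := (LinearMap.mul ℝ ℂ) c) (by simp [hdet, hc]) s
  rw [hdet, abs_of_nonneg (inv_nonneg.2 (Complex.normSq_nonneg c))] at this
  exact this
lemma map_cmul (c : ℂ) (hc : c ≠ 0) :
    Measure.map (fun z : ℂ => c * z) volume
      = ENNReal.ofReal (Complex.normSq c)⁻¹ • volume := by
  ext s hs
  rw [Measure.map_apply (by fun_prop) hs, vol_preimage_cmul c hc s, Measure.smul_apply,
    smul_eq_mul]

lemma prod_smul_left' {α β : Type*} [MeasurableSpace α] [MeasurableSpace β]
    (c : ENNReal) (μ : Measure α) (ν : Measure β) [SFinite ν] :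
    (c • μ).prod ν = c • μ.prod ν := by
  ext s hs
  rw [Measure.smul_apply, smul_eq_mul, Measure.prod_apply hs, Measure.prod_apply hs,
    lintegral_smul_measure, smul_eq_mul]


lemma prod_smul_right' {α β : Type*} [MeasurableSpace α] [MeasurableSpace β]
    (c : ENNReal) (hc : c ≠ ⊤) (μ : Measure α) (ν : Measure β) [SFinite ν] :
    μ.prod (c • ν) = c • μ.prod ν := by
  ext s hs
  rw [Measure.smul_apply, smul_eq_mul, Measure.prod_apply hs, Measure.prod_apply hs]
  simp_rw [Measure.smul_apply, smul_eq_mul]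
  rw [lintegral_const_mul' _ _ hc]

lemma vol_preimage_triple (c₀ c₁ c₂ : ℂ) (h₀ : c₀ ≠ 0) (h₁ : c₁ ≠ 0) (h₂ : c₂ ≠ 0)
    (Z : Set (ℂ × ℂ × ℂ)) (hZ : MeasurableSet Z) :
    volume ((fun v : ℂ × ℂ × ℂ => (c₀ * v.2.2, c₁ * v.1, c₂ * v.2.1)) ⁻¹' Z)
      = ENNReal.ofReal (Complex.normSq c₀)⁻¹ * (ENNReal.ofReal (Complex.normSq c₁)⁻¹
        * (ENNReal.ofReal (Complex.normSq c₂)⁻¹ * volume Z)) := by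
  have hswap : MeasurePreserving (Prod.swap : (ℂ × ℂ) × ℂ → ℂ × (ℂ × ℂ)) volume volume := by
    rw [Measure.volume_eq_prod, Measure.volume_eq_prod]
    exact Measure.measurePreserving_swap
  have hperm : MeasurePreserving
      (fun v : ℂ × ℂ × ℂ => ((v.2.2, v.1, v.2.1) : ℂ × ℂ × ℂ)) volume volume := by
    have h1 : MeasurePreserving (MeasurableEquiv.prodAssoc.symm :
        (ℂ × ℂ × ℂ) ≃ᵐ (ℂ × ℂ) × ℂ) volume volume :=
      (volume_preserving_prodAssoc (α₁ := ℂ) (β₁ := ℂ) (γ₁ := ℂ)).symm _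
    exact hswap.comp h1
  have key : (fun v : ℂ × ℂ × ℂ => (c₀ * v.2.2, c₁ * v.1, c₂ * v.2.1))
      = (fun v : ℂ × ℂ × ℂ => ((v.2.2, v.1, v.2.1) : ℂ × ℂ × ℂ)) ∘
        (Prod.map (fun z : ℂ => c₁ * z) (Prod.map (fun z : ℂ => c₂ * z) (fun z : ℂ => c₀ * z))) := by
    funext v; rfl
  rw [key, Set.preimage_comp]
  set W : Set (ℂ × ℂ × ℂ) :=
    (fun v : ℂ × ℂ × ℂ => ((v.2.2, v.1, v.2.1) : ℂ × ℂ × ℂ)) ⁻¹' Z with hW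
  have hWm : MeasurableSet W := hperm.measurable hZ
  have hmap : Measure.map
      (Prod.map (fun z : ℂ => c₁ * z) (Prod.map (fun z : ℂ => c₂ * z) (fun z : ℂ => c₀ * z)))
      (volume : Measure (ℂ × ℂ × ℂ))
      = (ENNReal.ofReal (Complex.normSq c₀)⁻¹ * (ENNReal.ofReal (Complex.normSq c₁)⁻¹
          * ENNReal.ofReal (Complex.normSq c₂)⁻¹)) • volume := by
    rw [Measure.volume_eq_prod, Measure.volume_eq_prod (α := ℂ) (β := ℂ),
      ← Measure.map_prod_map _ _ (by fun_prop) (by fun_prop),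
      ← Measure.map_prod_map _ _ (by fun_prop) (by fun_prop),
      map_cmul c₁ h₁, map_cmul c₂ h₂, map_cmul c₀ h₀,
      prod_smul_left', prod_smul_left', prod_smul_right' _ ENNReal.ofReal_ne_top,
      prod_smul_right' _ ENNReal.ofReal_ne_top, prod_smul_right' _ ENNReal.ofReal_ne_top,
      smul_smul, smul_smul]
    congr 1
    ring
  have h1 : volume ((Prod.map (fun z : ℂ => c₁ * z)
      (Prod.map (fun z : ℂ => c₂ * z) (fun z : ℂ => c₀ * z))) ⁻¹' W)
      = (ENNReal.ofReal (Complex.normSq c₀)⁻¹ * (ENNReal.ofReal (Complex.normSq c₁)⁻¹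
          * ENNReal.ofReal (Complex.normSq c₂)⁻¹)) * volume W := by
    rw [← Measure.map_apply (by fun_prop) hWm, hmap, Measure.smul_apply, smul_eq_mul]
  rw [h1, hperm.measure_preimage hZ.nullMeasurableSet]
  ring


lemma iff_helper {a c B P : ℝ} (hB : 0 < B) (hP : 0 < P) (h : a * (B * P) = c * P) :
    a ≤ 1 ↔ c ≤ B := by
  have hc : c = a * B := by
    have h2 : (a * B) * P = c * P := by linarith
    exact (mul_right_cancel₀ hP.ne' h2).symm
  subst hc
  constructor <;> intro h' <;> nlinarith

open scoped Real Classical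
set_option maxHeartbeats 1000000

/-- The archimedean density `ω_∞` of the `E₆` cubic surface. -/
noncomputable def omegaInfty : ℝ :=
  (12 / π) * ∫ z in {z : ℂ × ℂ × ℂ |
      Complex.normSq (z.1 * z.2.1 ^ 2) ≤ 1 ∧
      Complex.normSq (z.1 ^ 2 * z.2.1 + z.2.2 ^ 3) ≤ 1 ∧
      Complex.normSq (z.2.1 ^ 3) ≤ 1 ∧
      Complex.normSq (z.2.1 ^ 2 * z.2.2) ≤ 1}, (1 : ℝ)

/-- eq. 6.1: for fixed nonzero `η₁,η₃,η₄,η₅,η₆,η₇` and `B > 0`, the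
integral of `1/|η₄²η₅η₇³|` over the `(η₂,η₈,η₉) ∈ ℂ³` satisfying the four height
conditions equals `(B/ |η₁η₃η₄η₅η₆η₇|)·(π/12)·ω_∞`, where `|z| = z·conj z`. -/
theorem stmt_17 (B : ℝ) (hB : 0 < B) (η₁ η₃ η₄ η₅ η₆ η₇ : ℂ)
    (h1 : η₁ ≠ 0) (h3 : η₃ ≠ 0) (h4 : η₄ ≠ 0) (h5 : η₅ ≠ 0) (h6 : η₆ ≠ 0) (h7 : η₇ ≠ 0) :
    (12 / π) * (Complex.normSq (η₁ * η₃ * η₄ * η₅ * η₆ * η₇) / B) *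
      ∫ v in {v : ℂ × ℂ × ℂ |
          Complex.normSq (η₁ ^ 2 * v.1 ^ 3 * η₃ ^ 4 * η₄ ^ 4 * η₅ ^ 5 * η₆ ^ 6 * η₇ ^ 3) ≤ B ∧
          Complex.normSq (η₁ ^ 2 * v.1 ^ 2 * η₃ ^ 3 * η₄ ^ 2 * η₅ ^ 3 * η₆ ^ 4 * η₇ * v.2.1) ≤ B ∧
          Complex.normSq (η₁ * v.1 ^ 2 * η₃ ^ 2 * η₄ * η₅ ^ 2 * η₆ ^ 3 * v.2.2) ≤ B ∧
          Complex.normSq ((η₁ ^ 2 * η₃ * v.2.1 ^ 3 + v.1 * v.2.2 ^ 2) /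
            (η₄ ^ 2 * η₅ * η₇ ^ 3)) ≤ B},
        1 / Complex.normSq (η₄ ^ 2 * η₅ * η₇ ^ 3)
      = omegaInfty := by
  set Z : Set (ℂ × ℂ × ℂ) := {z : ℂ × ℂ × ℂ |
      Complex.normSq (z.1 * z.2.1 ^ 2) ≤ 1 ∧
      Complex.normSq (z.1 ^ 2 * z.2.1 + z.2.2 ^ 3) ≤ 1 ∧
      Complex.normSq (z.2.1 ^ 3) ≤ 1 ∧
      Complex.normSq (z.2.1 ^ 2 * z.2.2) ≤ 1} with hZdef
  have hZm : MeasurableSet Z := by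
    rw [hZdef, Set.setOf_and, Set.setOf_and, Set.setOf_and]
    refine (measurableSet_le
        ((Complex.continuous_normSq.comp (by fun_prop)).measurable) measurable_const).inter
      ((measurableSet_le
        ((Complex.continuous_normSq.comp (by fun_prop)).measurable) measurable_const).inter
        ((measurableSet_le
          ((Complex.continuous_normSq.comp (by fun_prop)).measurable) measurable_const).inter
          (measurableSet_le
            ((Complex.continuous_normSq.comp (by fun_prop)).measurable) measurable_const)))
  have hA₁0 : (η₁ * η₃ ^ 2 * η₄ ^ 3 * η₅ ^ 3 * η₆ ^ 3 * η₇ ^ 3 : ℂ) ≠ 0 := by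
    simp [h1, h3, h4, h5, h6, h7]
  have hA₂0 : (η₁ * η₃ * η₄ * η₅ * η₆ * η₇ : ℂ) ≠ 0 := by
    simp [h1, h3, h4, h5, h6, h7]
  have hD0 : (η₄ ^ 2 * η₅ * η₇ ^ 3 : ℂ) ≠ 0 := by
    simp [h4, h5, h7]
  set nsA₁ : ℝ := Complex.normSq (η₁ * η₃ ^ 2 * η₄ ^ 3 * η₅ ^ 3 * η₆ ^ 3 * η₇ ^ 3) with hnsA₁
  set nsA₂ : ℝ := Complex.normSq (η₁ * η₃ * η₄ * η₅ * η₆ * η₇) with hnsA₂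
  set nsD : ℝ := Complex.normSq (η₄ ^ 2 * η₅ * η₇ ^ 3) with hnsD
  have hA₁p : 0 < nsA₁ := Complex.normSq_pos.mpr hA₁0
  have hA₂p : 0 < nsA₂ := Complex.normSq_pos.mpr hA₂0
  have hDp : 0 < nsD := Complex.normSq_pos.mpr hD0
  set t : ℝ := (B * (nsA₁ * nsD)) ^ ((1 : ℝ) / 6) with htdef
  have ht : 0 < t := Real.rpow_pos_of_pos (by positivity) _
  have ht6 : t ^ 6 = B * (nsA₁ * nsD) := by
    rw [htdef, ← Real.rpow_natCast ((B * (nsA₁ * nsD)) ^ ((1:ℝ)/6)) 6,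
      ← Real.rpow_mul (by positivity)]
    norm_num
  set c₀ : ℂ := ((t : ℂ))⁻¹ with hc₀def
  set c₁ : ℂ := ((t : ℂ))⁻¹ * (η₁ * η₃ ^ 2 * η₄ ^ 3 * η₅ ^ 3 * η₆ ^ 3 * η₇ ^ 3) with hc₁def
  set c₂ : ℂ := ((t : ℂ))⁻¹ * (η₁ * η₃ * η₄ * η₅ * η₆ * η₇) with hc₂def
  have htC : ((t : ℂ)) ≠ 0 := Complex.ofReal_ne_zero.mpr ht.ne'
  have hc₀ : c₀ ≠ 0 := inv_ne_zero htC
  have hc₁ : c₁ ≠ 0 := mul_ne_zero (inv_ne_zero htC) hA₁0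
  have hc₂ : c₂ ≠ 0 := mul_ne_zero (inv_ne_zero htC) hA₂0
  have hand : Complex.normSq ((η₁ * η₃ ^ 2 * η₄ ^ 3 * η₅ ^ 3 * η₆ ^ 3 * η₇ ^ 3) *
      (η₄ ^ 2 * η₅ * η₇ ^ 3)) = nsA₁ * nsD := by rw [map_mul]
  have hcc : ((t * t)⁻¹ : ℝ) ^ 3 * t ^ 6 = 1 := by
    field_simp
  -- the set identity
  have hSeq : {v : ℂ × ℂ × ℂ |
          Complex.normSq (η₁ ^ 2 * v.1 ^ 3 * η₃ ^ 4 * η₄ ^ 4 * η₅ ^ 5 * η₆ ^ 6 * η₇ ^ 3) ≤ B ∧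
          Complex.normSq (η₁ ^ 2 * v.1 ^ 2 * η₃ ^ 3 * η₄ ^ 2 * η₅ ^ 3 * η₆ ^ 4 * η₇ * v.2.1) ≤ B ∧
          Complex.normSq (η₁ * v.1 ^ 2 * η₃ ^ 2 * η₄ * η₅ ^ 2 * η₆ ^ 3 * v.2.2) ≤ B ∧
          Complex.normSq ((η₁ ^ 2 * η₃ * v.2.1 ^ 3 + v.1 * v.2.2 ^ 2) /
            (η₄ ^ 2 * η₅ * η₇ ^ 3)) ≤ B}
      = (fun v : ℂ × ℂ × ℂ => ((c₀ * v.2.2, c₁ * v.1, c₂ * v.2.1) : ℂ × ℂ × ℂ)) ⁻¹' Z := by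
    ext v
    simp only [Set.mem_setOf_eq, Set.mem_preimage, hZdef]
    have IA : Complex.normSq ((c₀ * v.2.2) * (c₁ * v.1) ^ 2) ≤ 1 ↔
        Complex.normSq (η₁ * v.1 ^ 2 * η₃ ^ 2 * η₄ * η₅ ^ 2 * η₆ ^ 3 * v.2.2) ≤ B := by
      apply iff_helper hB (mul_pos hA₁p hDp)
      have e : (c₀ * v.2.2) * (c₁ * v.1) ^ 2 = ((t : ℂ))⁻¹ ^ 3 *
          ((η₁ * v.1 ^ 2 * η₃ ^ 2 * η₄ * η₅ ^ 2 * η₆ ^ 3 * v.2.2) *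
            ((η₁ * η₃ ^ 2 * η₄ ^ 3 * η₅ ^ 3 * η₆ ^ 3 * η₇ ^ 3) * (η₄ ^ 2 * η₅ * η₇ ^ 3))) := by
        rw [hc₀def, hc₁def]; ring
      rw [e, map_mul, map_pow, map_inv₀, Complex.normSq_ofReal, map_mul, hand, ← ht6]
      linear_combination (Complex.normSq (η₁ * v.1 ^ 2 * η₃ ^ 2 * η₄ * η₅ ^ 2 * η₆ ^ 3 * v.2.2)
        * (nsA₁ * nsD)) * hcc
    have IB : Complex.normSq ((c₀ * v.2.2) ^ 2 * (c₁ * v.1) + (c₂ * v.2.1) ^ 3) ≤ 1 ↔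
        Complex.normSq ((η₁ ^ 2 * η₃ * v.2.1 ^ 3 + v.1 * v.2.2 ^ 2) /
          (η₄ ^ 2 * η₅ * η₇ ^ 3)) ≤ B := by
      rw [map_div₀, ← hnsD, div_le_iff₀ hDp]
      apply iff_helper (mul_pos hB hDp) hA₁p
      have e : (c₀ * v.2.2) ^ 2 * (c₁ * v.1) + (c₂ * v.2.1) ^ 3 = ((t : ℂ))⁻¹ ^ 3 *
          ((η₁ ^ 2 * η₃ * v.2.1 ^ 3 + v.1 * v.2.2 ^ 2) *
            (η₁ * η₃ ^ 2 * η₄ ^ 3 * η₅ ^ 3 * η₆ ^ 3 * η₇ ^ 3)) := by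
        rw [hc₀def, hc₁def, hc₂def]; ring
      rw [e, map_mul, map_pow, map_inv₀, Complex.normSq_ofReal, map_mul, ← hnsA₁]
      have ht6' : t ^ 6 = B * nsD * nsA₁ := by rw [ht6]; ring
      rw [← ht6']
      linear_combination (Complex.normSq (η₁ ^ 2 * η₃ * v.2.1 ^ 3 + v.1 * v.2.2 ^ 2)
        * nsA₁) * hcc
    have IC : Complex.normSq ((c₁ * v.1) ^ 3) ≤ 1 ↔
        Complex.normSq (η₁ ^ 2 * v.1 ^ 3 * η₃ ^ 4 * η₄ ^ 4 * η₅ ^ 5 * η₆ ^ 6 * η₇ ^ 3) ≤ B := by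
      apply iff_helper hB (mul_pos hA₁p hDp)
      have e : (c₁ * v.1) ^ 3 = ((t : ℂ))⁻¹ ^ 3 *
          ((η₁ ^ 2 * v.1 ^ 3 * η₃ ^ 4 * η₄ ^ 4 * η₅ ^ 5 * η₆ ^ 6 * η₇ ^ 3) *
            ((η₁ * η₃ ^ 2 * η₄ ^ 3 * η₅ ^ 3 * η₆ ^ 3 * η₇ ^ 3) * (η₄ ^ 2 * η₅ * η₇ ^ 3))) := by
        rw [hc₁def]; ring
      rw [e, map_mul, map_pow, map_inv₀, Complex.normSq_ofReal, map_mul, hand, ← ht6]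
      linear_combination (Complex.normSq (η₁ ^ 2 * v.1 ^ 3 * η₃ ^ 4 * η₄ ^ 4 * η₅ ^ 5 * η₆ ^ 6 * η₇ ^ 3)
        * (nsA₁ * nsD)) * hcc
    have ID : Complex.normSq ((c₁ * v.1) ^ 2 * (c₂ * v.2.1)) ≤ 1 ↔
        Complex.normSq (η₁ ^ 2 * v.1 ^ 2 * η₃ ^ 3 * η₄ ^ 2 * η₅ ^ 3 * η₆ ^ 4 * η₇ * v.2.1) ≤ B := by
      apply iff_helper hB (mul_pos hA₁p hDp)
      have e : (c₁ * v.1) ^ 2 * (c₂ * v.2.1) = ((t : ℂ))⁻¹ ^ 3 *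
          ((η₁ ^ 2 * v.1 ^ 2 * η₃ ^ 3 * η₄ ^ 2 * η₅ ^ 3 * η₆ ^ 4 * η₇ * v.2.1) *
            ((η₁ * η₃ ^ 2 * η₄ ^ 3 * η₅ ^ 3 * η₆ ^ 3 * η₇ ^ 3) * (η₄ ^ 2 * η₅ * η₇ ^ 3))) := by
        rw [hc₁def, hc₂def]; ring
      rw [e, map_mul, map_pow, map_inv₀, Complex.normSq_ofReal, map_mul, hand, ← ht6]
      linear_combination (Complex.normSq (η₁ ^ 2 * v.1 ^ 2 * η₃ ^ 3 * η₄ ^ 2 * η₅ ^ 3 * η₆ ^ 4 * η₇ * v.2.1)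
        * (nsA₁ * nsD)) * hcc
    exact ⟨fun ⟨s1, s2, s3, s4⟩ => ⟨IA.mpr s3, IB.mpr s4, IC.mpr s1, ID.mpr s2⟩,
      fun ⟨za, zb, zc, zd⟩ => ⟨IC.mp zc, ID.mp zd, IA.mp za, IB.mp zb⟩⟩
  rw [hSeq, setIntegral_const, smul_eq_mul, measureReal_def,
    vol_preimage_triple c₀ c₁ c₂ hc₀ hc₁ hc₂ Z hZm,
    ENNReal.toReal_mul, ENNReal.toReal_mul, ENNReal.toReal_mul,
    ENNReal.toReal_ofReal (inv_nonneg.2 (Complex.normSq_nonneg _)),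
    ENNReal.toReal_ofReal (inv_nonneg.2 (Complex.normSq_nonneg _)),
    ENNReal.toReal_ofReal (inv_nonneg.2 (Complex.normSq_nonneg _))]
  rw [omegaInfty, setIntegral_const, smul_eq_mul, mul_one, measureReal_def]
  have h₀ : Complex.normSq c₀ = (t * t)⁻¹ := by
    rw [hc₀def, map_inv₀, Complex.normSq_ofReal]
  have h₁ : Complex.normSq c₁ = (t * t)⁻¹ * nsA₁ := by
    rw [hc₁def, map_mul, map_inv₀, Complex.normSq_ofReal, ← hnsA₁]
  have h₂ : Complex.normSq c₂ = (t * t)⁻¹ * nsA₂ := by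
    rw [hc₂def, map_mul, map_inv₀, Complex.normSq_ofReal, ← hnsA₂]
  rw [h₀, h₁, h₂]
  set R : ℝ := (volume Z).toReal with hRdef
  have hone : (nsA₂ / B) * (((t * t)⁻¹)⁻¹ * (((t * t)⁻¹ * nsA₁)⁻¹ * ((t * t)⁻¹ * nsA₂)⁻¹)
      * (1 / nsD)) = 1 := by
    have h66 : (t * t) ^ 3 = B * (nsA₁ * nsD) := by rw [← ht6]; ring
    field_simp
    linear_combination ht6
  linear_combination (12 / π * R) * hone
end
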